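/- arXiv:2210.00736 — 6 statements merged into one kernel-verified Lean document; each statement's English description precedes it below -/
import Mathlib

section
/- Let (Ω, 𝒜, Q) be a probability space, π a probability measure on a measurable space Z, and for each ω let π_ω be a finite measure on Z with total mass at most C, such that π(B) = (1/c₀)∫ π_ω(B) Q(dω) for all measurable B, where c₀ = ∫ π_ω(Z) Q(dω) > 0. Let ψ: Z × Ω → ℝ be measurable and define the signed measure ν(B) = ∫∫_B ψ(z,ω) π_ω(dz) Q(dω). Then ν is absolutely continuous with respect to π and, for q ∈ [1,∞), ‖dν/dπ‖_{L^q(π)} ≤ C^{1−1/q} · (∫∫ |ψ(z,ω)|^q π_ω(dz) Q(dω))^{1/q}. -/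
open MeasureTheory ProbabilityTheory ENNReal

/-- With `π(B) = (1/c₀) ∫ π_ω(B) Q(dω)`, `π_ω` of total mass at most `C`,
and `ν(B) = ∫∫_B ψ(z,ω) π_ω(dz) Q(dω)`, the measure `ν` has a density `g` with respect to
`π` (absolute continuity) satisfying
`‖g‖_{L^q(π)} ≤ C^{1-1/q} (∫∫ |ψ|^q π_ω(dz) Q(dω))^{1/q}`. -/
theorem density_Lq_bound
    {Ω Z : Type*} [MeasurableSpace Ω] [MeasurableSpace Z]
    (Q : Measure Ω) [IsProbabilityMeasure Q]
    (κ : Kernel Ω Z) [IsFiniteKernel κ]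
    (C : ℝ) (hC : 0 < C) (hκC : ∀ ω, κ ω Set.univ ≤ ENNReal.ofReal C)
    (c₀ : ℝ≥0∞) (hc₀def : c₀ = ∫⁻ ω, κ ω Set.univ ∂Q) (hc₀ : 0 < c₀)
    (π : Measure Z) [IsProbabilityMeasure π]
    (hπ : ∀ B : Set Z, MeasurableSet B → π B = (∫⁻ ω, κ ω B ∂Q) / c₀)
    (ψ : Z → Ω → ℝ) (hψ : Measurable (Function.uncurry ψ))
    (hint : Integrable (fun p : Ω × Z => ψ p.2 p.1) (Q.compProd κ))
    (q : ℝ) (hq : 1 ≤ q) :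
    ∃ g : Z → ℝ, Measurable g ∧
      (∀ B : Set Z, MeasurableSet B →
        ∫ z in B, g z ∂π = ∫ ω, ∫ z in B, ψ z ω ∂(κ ω) ∂Q) ∧
      (∫⁻ z, ENNReal.ofReal |g z| ^ q ∂π) ^ (1/q)
        ≤ ENNReal.ofReal C ^ (1 - 1/q)
            * (∫⁻ ω, ∫⁻ z, ENNReal.ofReal |ψ z ω| ^ q ∂(κ ω) ∂Q) ^ (1/q) := by
  have hq0 : (0:ℝ) < q := lt_of_lt_of_le one_pos hq
  set μ : Measure (Ω × Z) := Q.compProd κ with hμdef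
  -- basic facts about c₀
  have hc₀C : c₀ ≤ ENNReal.ofReal C := by
    rw [hc₀def]
    calc ∫⁻ ω, κ ω Set.univ ∂Q ≤ ∫⁻ _, ENNReal.ofReal C ∂Q := lintegral_mono hκC
    _ = ENNReal.ofReal C := by simp
  have hc₀top : c₀ ≠ ∞ := (lt_of_le_of_lt hc₀C ofReal_lt_top).ne
  have hc₀0 : c₀ ≠ 0 := hc₀.ne'
  -- the three densities
  set Φp : Ω × Z → ℝ≥0∞ := fun p => ENNReal.ofReal (ψ p.2 p.1) with hΦpdef
  set Φm : Ω × Z → ℝ≥0∞ := fun p => ENNReal.ofReal (-ψ p.2 p.1) with hΦmdef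
  set Φa : Ω × Z → ℝ≥0∞ := fun p => ENNReal.ofReal |ψ p.2 p.1| with hΦadef
  have hψ' : Measurable fun p : Ω × Z => ψ p.2 p.1 := hψ.comp measurable_swap
  have hΦp : Measurable Φp := hψ'.ennreal_ofReal
  have hΦm : Measurable Φm := hψ'.neg.ennreal_ofReal
  have hΦa : Measurable Φa := hψ'.abs.ennreal_ofReal
  have hΦpa : ∀ p, Φp p ≤ Φa p := fun p => ofReal_le_ofReal (le_abs_self _)
  have hΦma : ∀ p, Φm p ≤ Φa p := fun p => ofReal_le_ofReal (neg_le_abs _)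
  have hΦsum : ∀ p, Φa p = Φp p + Φm p := by
    intro p
    rcases le_total 0 (ψ p.2 p.1) with h | h
    · simp [hΦadef, hΦpdef, hΦmdef, abs_of_nonneg h, ofReal_of_nonpos (neg_nonpos.mpr h)]
    · simp [hΦadef, hΦpdef, hΦmdef, abs_of_nonpos h, ofReal_of_nonpos h]
  -- the measures
  set νp : Measure Z := (μ.withDensity Φp).map Prod.snd with hνpdef
  set νm : Measure Z := (μ.withDensity Φm).map Prod.snd with hνmdef
  set νt : Measure Z := (μ.withDensity Φa).map Prod.snd with hνtdef
  -- lintegral formulas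
  have hmap : ∀ (Φ : Ω × Z → ℝ≥0∞), Measurable Φ → ∀ (h : Z → ℝ≥0∞), Measurable h →
      ∫⁻ z, h z ∂((μ.withDensity Φ).map Prod.snd)
        = ∫⁻ ω, ∫⁻ z, h z * Φ (ω, z) ∂(κ ω) ∂Q := by
    intro Φ hΦ h hh
    rw [lintegral_map hh measurable_snd,
      lintegral_withDensity_eq_lintegral_mul μ hΦ
        (show Measurable fun p : Ω × Z => h p.2 from hh.comp measurable_snd)]
    rw [show (fun a => (Φ * fun p : Ω × Z => h p.2) a) = fun p : Ω × Z => h p.2 * Φ p by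
      funext p; simp [mul_comm]]
    exact Measure.lintegral_compProd ((hh.comp measurable_snd).mul hΦ)
  have hset : ∀ (Φ : Ω × Z → ℝ≥0∞), Measurable Φ → ∀ B : Set Z, MeasurableSet B →
      ((μ.withDensity Φ).map Prod.snd) B = ∫⁻ ω, ∫⁻ z in B, Φ (ω, z) ∂(κ ω) ∂Q := by
    intro Φ hΦ B hB
    rw [Measure.map_apply measurable_snd hB,
      withDensity_apply _ (hB.preimage measurable_snd)]
    have hpre : Prod.snd ⁻¹' B = (Set.univ ×ˢ B : Set (Ω × Z)) := by
      ext p; simp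
    rw [hpre, Measure.setLIntegral_compProd hΦ MeasurableSet.univ hB,
      Measure.restrict_univ]
  have huniv : ∀ (Φ : Ω × Z → ℝ≥0∞),
      ((μ.withDensity Φ).map Prod.snd) Set.univ = ∫⁻ p, Φ p ∂μ := by
    intro Φ
    rw [Measure.map_apply measurable_snd MeasurableSet.univ, Set.preimage_univ,
      withDensity_apply _ MeasurableSet.univ, setLIntegral_univ]
  -- measurability of ω ↦ ∫⁻ z in B, Φ (ω, z) ∂κ ω
  have hmeas_out : ∀ (Φ : Ω × Z → ℝ≥0∞), Measurable Φ → ∀ B : Set Z, MeasurableSet B →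
      Measurable fun ω => ∫⁻ z in B, Φ (ω, z) ∂(κ ω) := by
    intro Φ hΦ B hB
    have h1 : ∀ ω, ∫⁻ z in B, Φ (ω, z) ∂(κ ω)
        = ∫⁻ z, B.indicator (fun z' => Φ (ω, z')) z ∂(κ ω) := by
      intro ω; rw [lintegral_indicator hB]
    simp_rw [h1]
    refine Measurable.lintegral_kernel_prod_right
      (f := fun ω z => B.indicator (fun z' => Φ (ω, z')) z) ?_
    have h2 : (Function.uncurry fun ω z => B.indicator (fun z' => Φ (ω, z')) z)
        = (Set.univ ×ˢ B).indicator Φ := by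
      funext p
      rcases p with ⟨ω, z⟩
      by_cases hz : z ∈ B <;> simp [Function.uncurry, Set.indicator, hz]
    rw [h2]
    exact hΦ.indicator (MeasurableSet.univ.prod hB)
  have hmeas_out' : ∀ (Φ : Ω × Z → ℝ≥0∞), Measurable Φ →
      Measurable fun ω => ∫⁻ z, Φ (ω, z) ∂(κ ω) := by
    intro Φ hΦ
    exact Measurable.lintegral_kernel_prod_right (f := fun ω z => Φ (ω, z)) hΦ
  -- finiteness
  have hfinμ : ∫⁻ p, Φa p ∂μ < ∞ := by
    have h1 := hint.hasFiniteIntegral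
    rw [HasFiniteIntegral] at h1
    have h2 : ∀ p : Ω × Z, ‖ψ p.2 p.1‖ₑ = Φa p := by
      intro p; rw [← ofReal_norm, Real.norm_eq_abs]
    rwa [lintegral_congr h2] at h1
  haveI hνtfin : IsFiniteMeasure νt := ⟨by rw [hνtdef, huniv]; exact hfinμ⟩
  haveI hνpfin : IsFiniteMeasure νp :=
    ⟨by rw [hνpdef, huniv]; exact lt_of_le_of_lt (lintegral_mono hΦpa) hfinμ⟩
  haveI hνmfin : IsFiniteMeasure νm :=
    ⟨by rw [hνmdef, huniv]; exact lt_of_le_of_lt (lintegral_mono hΦma) hfinμ⟩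
  -- absolute continuity
  have hACgen : ∀ (Φ : Ω × Z → ℝ≥0∞), Measurable Φ →
      ((μ.withDensity Φ).map Prod.snd) ≪ π := by
    intro Φ hΦ
    refine Measure.AbsolutelyContinuous.mk ?_
    intro B hB hπB
    have h1 : ∫⁻ ω, κ ω B ∂Q = 0 := by
      have h2 := (hπ B hB).symm
      rw [hπB, ENNReal.div_eq_zero_iff] at h2
      exact h2.resolve_right hc₀top
    have h2 : ∀ᵐ ω ∂Q, κ ω B = 0 := by
      rwa [lintegral_eq_zero_iff (Kernel.measurable_coe κ hB)] at h1
    rw [hset Φ hΦ B hB, lintegral_eq_zero_iff (hmeas_out Φ hΦ B hB)]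
    filter_upwards [h2] with ω hω
    exact setLIntegral_measure_zero B _ hω
  have hACp : νp ≪ π := hACgen Φp hΦp
  have hACm : νm ≪ π := hACgen Φm hΦm
  have hACt : νt ≪ π := hACgen Φa hΦa
  -- Radon-Nikodym derivatives
  set fp : Z → ℝ≥0∞ := νp.rnDeriv π with hfpdef
  set fm : Z → ℝ≥0∞ := νm.rnDeriv π with hfmdef
  set ft : Z → ℝ≥0∞ := νt.rnDeriv π with hftdef
  have hfp_meas : Measurable fp := Measure.measurable_rnDeriv _ _
  have hfm_meas : Measurable fm := Measure.measurable_rnDeriv _ _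
  have hft_meas : Measurable ft := Measure.measurable_rnDeriv _ _
  refine ⟨fun z => (fp z).toReal - (fm z).toReal,
    hfp_meas.ennreal_toReal.sub hfm_meas.ennreal_toReal, ?_, ?_⟩
  · -- the density property
    intro B hB
    -- LHS
    have hip : Integrable (fun z => (fp z).toReal) π :=
      integrable_toReal_of_lintegral_ne_top hfp_meas.aemeasurable
        (Measure.lintegral_rnDeriv_lt_top νp π).ne
    have him : Integrable (fun z => (fm z).toReal) π :=
      integrable_toReal_of_lintegral_ne_top hfm_meas.aemeasurable
        (Measure.lintegral_rnDeriv_lt_top νm π).ne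
    have hLHS : ∫ z in B, ((fp z).toReal - (fm z).toReal) ∂π
        = (νp B).toReal - (νm B).toReal := by
      rw [integral_sub hip.integrableOn him.integrableOn]
      have h1 : ∫ z in B, (fp z).toReal ∂π = (νp B).toReal := by
        rw [integral_toReal (hfp_meas.aemeasurable.restrict)
          (ae_restrict_of_ae (Measure.rnDeriv_lt_top νp π)),
          Measure.setLIntegral_rnDeriv hACp B]
      have h2 : ∫ z in B, (fm z).toReal ∂π = (νm B).toReal := by
        rw [integral_toReal (hfm_meas.aemeasurable.restrict)
          (ae_restrict_of_ae (Measure.rnDeriv_lt_top νm π)),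
          Measure.setLIntegral_rnDeriv hACm B]
      rw [h1, h2]
    rw [hLHS]
    -- RHS
    have hae : ∀ᵐ ω ∂Q, Integrable (fun z => ψ z ω) (κ ω) :=
      ((Measure.integrable_compProd_iff hint.aestronglyMeasurable).mp hint).1
    have hFp_fin : ∫⁻ ω, ∫⁻ z in B, Φp (ω, z) ∂(κ ω) ∂Q ≠ ∞ := by
      rw [← hset Φp hΦp B hB]; exact measure_ne_top νp B
    have hFm_fin : ∫⁻ ω, ∫⁻ z in B, Φm (ω, z) ∂(κ ω) ∂Q ≠ ∞ := by
      rw [← hset Φm hΦm B hB]; exact measure_ne_top νm B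
    have hFp_meas := hmeas_out Φp hΦp B hB
    have hFm_meas := hmeas_out Φm hΦm B hB
    have hRHS1 : ∫ ω, ∫ z in B, ψ z ω ∂(κ ω) ∂Q
        = ∫ ω, ((∫⁻ z in B, Φp (ω, z) ∂(κ ω)).toReal
            - (∫⁻ z in B, Φm (ω, z) ∂(κ ω)).toReal) ∂Q := by
      refine integral_congr_ae ?_
      filter_upwards [hae] with ω hω
      exact integral_eq_lintegral_pos_part_sub_lintegral_neg_part hω.integrableOn
    rw [hRHS1, integral_sub
      (integrable_toReal_of_lintegral_ne_top hFp_meas.aemeasurable hFp_fin)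
      (integrable_toReal_of_lintegral_ne_top hFm_meas.aemeasurable hFm_fin),
      integral_toReal hFp_meas.aemeasurable (ae_lt_top hFp_meas hFp_fin),
      integral_toReal hFm_meas.aemeasurable (ae_lt_top hFm_meas hFm_fin),
      ← hset Φp hΦp B hB, ← hset Φm hΦm B hB]
  · -- the L^q bound
    -- νt = νp + νm
    have hadd : νt = νp + νm := by
      ext B hB
      rw [Measure.add_apply, hset Φa hΦa B hB, hset Φp hΦp B hB, hset Φm hΦm B hB]
      have h1 : ∀ ω, ∫⁻ z in B, Φa (ω, z) ∂(κ ω)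
          = ∫⁻ z in B, Φp (ω, z) ∂(κ ω) + ∫⁻ z in B, Φm (ω, z) ∂(κ ω) := by
        intro ω
        rw [← lintegral_add_left (show Measurable fun z => Φp (ω, z) from hΦp.comp measurable_prodMk_left)]
        exact lintegral_congr fun z => hΦsum (ω, z)
      simp_rw [h1]
      exact lintegral_add_left (hmeas_out Φp hΦp B hB) _
    have hfg : ∀ᵐ z ∂π, ENNReal.ofReal |(fp z).toReal - (fm z).toReal| ≤ ft z := by
      have h1 : ft =ᵐ[π] fp + fm := by
        rw [hftdef, hadd]; exact Measure.rnDeriv_add νp νm π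
      filter_upwards [h1, Measure.rnDeriv_lt_top νp π, Measure.rnDeriv_lt_top νm π]
        with z hz hp hm
      rw [hz]
      calc ENNReal.ofReal |(fp z).toReal - (fm z).toReal|
          ≤ ENNReal.ofReal ((fp z).toReal + (fm z).toReal) := by
            refine ofReal_le_ofReal ?_
            calc |(fp z).toReal - (fm z).toReal| ≤ |(fp z).toReal| + |(fm z).toReal| :=
              abs_sub _ _
            _ = (fp z).toReal + (fm z).toReal := by
              rw [abs_of_nonneg toReal_nonneg, abs_of_nonneg toReal_nonneg]
      _ = fp z + fm z := by
        rw [ofReal_add toReal_nonneg toReal_nonneg, ofReal_toReal hp.ne,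
          ofReal_toReal hm.ne]
      _ = (fp + fm) z := rfl
    set Bq : ℝ≥0∞ := ∫⁻ ω, ∫⁻ z, ENNReal.ofReal |ψ z ω| ^ q ∂(κ ω) ∂Q with hBqdef
    have hBq : Bq = ∫⁻ ω, ∫⁻ z, Φa (ω, z) ^ q ∂(κ ω) ∂Q := rfl
    have hmono : ∫⁻ z, ENNReal.ofReal |(fp z).toReal - (fm z).toReal| ^ q ∂π
        ≤ ∫⁻ z, ft z ^ q ∂π :=
      lintegral_mono_ae (hfg.mono fun z h => ENNReal.rpow_le_rpow h hq0.le)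
    have hwd : ∀ h : Z → ℝ≥0∞, Measurable h →
        ∫⁻ z, h z * ft z ∂π = ∫⁻ ω, ∫⁻ z, h z * Φa (ω, z) ∂(κ ω) ∂Q := by
      intro h hh
      have h1 : ∫⁻ z, h z * ft z ∂π = ∫⁻ z, h z ∂(π.withDensity ft) := by
        rw [lintegral_withDensity_eq_lintegral_mul π hft_meas hh]
        exact lintegral_congr fun z => (mul_comm _ _)
      rw [h1, hftdef, Measure.withDensity_rnDeriv_eq νt π hACt, hνtdef,
        hmap Φa hΦa h hh]
    suffices hmain : (∫⁻ z, ft z ^ q ∂π) ^ (1/q)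
        ≤ ENNReal.ofReal C ^ (1 - 1/q) * Bq ^ (1/q) by
      exact le_trans (ENNReal.rpow_le_rpow hmono (by positivity)) hmain
    by_cases hq1 : q = 1
    · subst hq1
      simp only [one_div, inv_one, rpow_one, sub_self, rpow_zero, one_mul]
      rw [hBqdef]
      simp only [rpow_one]
      have h1 := hwd (fun _ => 1) measurable_const
      simp only [one_mul, hΦadef] at h1 ⊢
      exact le_of_eq h1
    -- now 1 < q
    have hq1' : 1 < q := lt_of_le_of_ne hq (Ne.symm hq1)
    set q' : ℝ := q / (q - 1) with hq'def
    have hpq : q.HolderConjugate q' := Real.HolderConjugate.conjExponent hq1'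
    have hq'0 : (0:ℝ) < q' := hpq.symm.pos
    have h1q' : 1/q + 1/q' = 1 := by
      simpa [one_div] using hpq.inv_add_inv_eq_one
    have hsub : (q - 1) * q' = q := hpq.sub_one_mul_conj
    -- pushforward identity
    have hρ : ∀ h : Z → ℝ≥0∞, Measurable h →
        ∫⁻ ω, ∫⁻ z, h z ∂(κ ω) ∂Q = c₀ * ∫⁻ z, h z ∂π := by
      intro h hh
      have h1 : ∫⁻ ω, ∫⁻ z, h z ∂(κ ω) ∂Q = ∫⁻ z, h z ∂(μ.map Prod.snd) := by
        rw [lintegral_map hh measurable_snd]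
        exact (Measure.lintegral_compProd (hh.comp measurable_snd)).symm
      have h2 : μ.map Prod.snd = c₀ • π := by
        ext B hB
        rw [Measure.map_apply measurable_snd hB, Measure.smul_apply, smul_eq_mul,
          hπ B hB]
        have hpre : Prod.snd ⁻¹' B = (Set.univ ×ˢ B : Set (Ω × Z)) := by ext p; simp
        rw [hpre, hμdef, Measure.compProd_apply_prod MeasurableSet.univ hB,
          Measure.restrict_univ]
        exact (ENNReal.mul_div_cancel hc₀0 hc₀top).symm
      rw [h1, h2, lintegral_smul_measure, smul_eq_mul]
    -- truncations
    have hfn_meas : ∀ n : ℕ, Measurable fun z => min (ft z) (n : ℝ≥0∞) :=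
      fun n => hft_meas.min measurable_const
    set A : ℕ → ℝ≥0∞ := fun n => ∫⁻ z, (min (ft z) (n : ℝ≥0∞)) ^ q ∂π with hAdef
    have hA_top : ∀ n, A n ≠ ∞ := by
      intro n
      have h1 : A n ≤ (n : ℝ≥0∞) ^ q := by
        rw [hAdef]
        calc ∫⁻ z, (min (ft z) (n : ℝ≥0∞)) ^ q ∂π
            ≤ ∫⁻ _, (n : ℝ≥0∞) ^ q ∂π :=
              lintegral_mono fun z => ENNReal.rpow_le_rpow (min_le_right _ _) hq0.le
        _ = (n : ℝ≥0∞) ^ q := by simp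
      exact (lt_of_le_of_lt h1 (ENNReal.rpow_lt_top_of_nonneg hq0.le (natCast_ne_top n))).ne
    -- the key estimate
    have hkey : ∀ n, A n ≤ ENNReal.ofReal C ^ (q - 1) * Bq := by
      intro n
      set fn : Z → ℝ≥0∞ := fun z => min (ft z) (n : ℝ≥0∞) with hfndef
      have hfn : Measurable fn := hfn_meas n
      have hfn_pow : Measurable fun z => fn z ^ (q - 1) := hfn.pow_const _
      have step1 : A n ≤ ∫⁻ z, fn z ^ (q - 1) * ft z ∂π := by
        refine lintegral_mono fun z => ?_
        calc fn z ^ q = fn z ^ ((q - 1) + 1) := by ring_nf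
        _ = fn z ^ (q - 1) * fn z ^ (1:ℝ) :=
          ENNReal.rpow_add_of_nonneg _ _ (by linarith) zero_le_one
        _ = fn z ^ (q - 1) * fn z := by rw [rpow_one]
        _ ≤ fn z ^ (q - 1) * ft z := mul_le_mul_right (min_le_left _ _) _
      have step2 : ∫⁻ z, fn z ^ (q - 1) * ft z ∂π
          = ∫⁻ ω, ∫⁻ z, fn z ^ (q - 1) * Φa (ω, z) ∂(κ ω) ∂Q := hwd _ hfn_pow
      have step3 : ∀ ω, ∫⁻ z, fn z ^ (q - 1) * Φa (ω, z) ∂(κ ω)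
          ≤ (∫⁻ z, Φa (ω, z) ^ q ∂(κ ω)) ^ (1/q)
            * (∫⁻ z, fn z ^ q ∂(κ ω)) ^ (1/q') := by
        intro ω
        have h1 := ENNReal.lintegral_mul_le_Lp_mul_Lq (κ ω) hpq
          (f := fun z => Φa (ω, z)) (g := fun z => fn z ^ (q - 1))
          ((hΦa.comp measurable_prodMk_left).aemeasurable) hfn_pow.aemeasurable
        have h2 : ∀ z, (fn z ^ (q - 1)) ^ q' = fn z ^ q := by
          intro z; rw [← ENNReal.rpow_mul, hsub]
        calc ∫⁻ z, fn z ^ (q - 1) * Φa (ω, z) ∂(κ ω)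
            = ∫⁻ z, Φa (ω, z) * fn z ^ (q - 1) ∂(κ ω) := by
              exact lintegral_congr fun z => mul_comm _ _
        _ ≤ (∫⁻ z, Φa (ω, z) ^ q ∂(κ ω)) ^ (1/q)
              * (∫⁻ z, (fn z ^ (q - 1)) ^ q' ∂(κ ω)) ^ (1/q') := h1
        _ = (∫⁻ z, Φa (ω, z) ^ q ∂(κ ω)) ^ (1/q)
              * (∫⁻ z, fn z ^ q ∂(κ ω)) ^ (1/q') := by
            congr 1
            exact congrArg (· ^ (1/q')) (lintegral_congr h2)
      have hG_meas : Measurable fun ω => ∫⁻ z, Φa (ω, z) ^ q ∂(κ ω) :=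
        hmeas_out' _ (hΦa.pow_const q)
      have hH_meas : Measurable fun ω => ∫⁻ z, fn z ^ q ∂(κ ω) :=
        hmeas_out' (fun p => fn p.2 ^ q) ((hfn.comp measurable_snd).pow_const q)
      have step4 : ∫⁻ ω, (∫⁻ z, Φa (ω, z) ^ q ∂(κ ω)) ^ (1/q)
            * (∫⁻ z, fn z ^ q ∂(κ ω)) ^ (1/q') ∂Q
          ≤ Bq ^ (1/q) * (∫⁻ ω, ∫⁻ z, fn z ^ q ∂(κ ω) ∂Q) ^ (1/q') := by
        have h1 := ENNReal.lintegral_mul_le_Lp_mul_Lq Q hpq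
          (f := fun ω => (∫⁻ z, Φa (ω, z) ^ q ∂(κ ω)) ^ (1/q))
          (g := fun ω => (∫⁻ z, fn z ^ q ∂(κ ω)) ^ (1/q'))
          (hG_meas.pow_const _).aemeasurable (hH_meas.pow_const _).aemeasurable
        have h2 : ∀ x : ℝ≥0∞, (x ^ (1/q)) ^ q = x := by
          intro x; rw [← ENNReal.rpow_mul, one_div_mul_cancel hq0.ne', rpow_one]
        have h3 : ∀ x : ℝ≥0∞, (x ^ (1/q')) ^ q' = x := by
          intro x; rw [← ENNReal.rpow_mul, one_div_mul_cancel hq'0.ne', rpow_one]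
        simp_rw [h2, h3] at h1
        exact h1.trans_eq (by rw [hBq])
      have step5 : ∫⁻ ω, ∫⁻ z, fn z ^ q ∂(κ ω) ∂Q = c₀ * A n :=
        hρ (fun z => fn z ^ q) (hfn.pow_const q)
      have hest : A n ≤ Bq ^ (1/q) * (c₀ ^ (1/q') * A n ^ (1/q')) := by
        calc A n ≤ ∫⁻ z, fn z ^ (q - 1) * ft z ∂π := step1
        _ = ∫⁻ ω, ∫⁻ z, fn z ^ (q - 1) * Φa (ω, z) ∂(κ ω) ∂Q := step2
        _ ≤ ∫⁻ ω, (∫⁻ z, Φa (ω, z) ^ q ∂(κ ω)) ^ (1/q)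
              * (∫⁻ z, fn z ^ q ∂(κ ω)) ^ (1/q') ∂Q := lintegral_mono step3
        _ ≤ Bq ^ (1/q) * (∫⁻ ω, ∫⁻ z, fn z ^ q ∂(κ ω) ∂Q) ^ (1/q') := step4
        _ = Bq ^ (1/q) * (c₀ * A n) ^ (1/q') := by rw [step5]
        _ = Bq ^ (1/q) * (c₀ ^ (1/q') * A n ^ (1/q')) := by
            rw [ENNReal.mul_rpow_of_nonneg _ _ (by positivity)]
      by_cases hAn0 : A n = 0
      · rw [hAn0]; exact zero_le
      have hAn' : A n ≠ ∞ := hA_top n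
      have hsplit : A n = A n ^ (1/q) * A n ^ (1/q') := by
        rw [← ENNReal.rpow_add _ _ hAn0 hAn', h1q', rpow_one]
      have hcancel : A n ^ (1/q) ≤ Bq ^ (1/q) * c₀ ^ (1/q') := by
        have hne0 : A n ^ (1/q') ≠ 0 := by
          simp [ENNReal.rpow_eq_zero_iff, hAn0, hAn', hq'0, not_lt.mpr (by positivity : (0:ℝ) ≤ 1/q')]
        have hnetop : A n ^ (1/q') ≠ ∞ :=
          (ENNReal.rpow_lt_top_of_nonneg (by positivity) hAn').ne
        rw [← ENNReal.mul_le_mul_iff_left hne0 hnetop, ← hsplit]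
        calc A n ≤ Bq ^ (1/q) * (c₀ ^ (1/q') * A n ^ (1/q')) := hest
        _ = Bq ^ (1/q) * c₀ ^ (1/q') * A n ^ (1/q') := by ring
      have hq'q : (1/q') * q = q - 1 := by
        have h1 : (1:ℝ)/q' = 1 - 1/q := by linarith
        rw [h1]
        field_simp
      calc A n = (A n ^ (1/q)) ^ q := by
            rw [← ENNReal.rpow_mul, one_div_mul_cancel hq0.ne', rpow_one]
      _ ≤ (Bq ^ (1/q) * c₀ ^ (1/q')) ^ q := ENNReal.rpow_le_rpow hcancel hq0.le
      _ = Bq ^ ((1/q) * q) * c₀ ^ ((1/q') * q) := by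
          rw [ENNReal.mul_rpow_of_nonneg _ _ hq0.le, ← ENNReal.rpow_mul, ← ENNReal.rpow_mul]
      _ = Bq * c₀ ^ (q - 1) := by rw [one_div_mul_cancel hq0.ne', rpow_one, hq'q]
      _ ≤ Bq * ENNReal.ofReal C ^ (q - 1) :=
          mul_le_mul_right (ENNReal.rpow_le_rpow hc₀C (by linarith)) _
      _ = ENNReal.ofReal C ^ (q - 1) * Bq := mul_comm _ _
    -- supremum over truncations
    have hsup : ∫⁻ z, ft z ^ q ∂π ≤ ENNReal.ofReal C ^ (q - 1) * Bq := by
      have hpt : ∀ᵐ z ∂π, ft z ^ q = ⨆ n : ℕ, (min (ft z) (n : ℝ≥0∞)) ^ q := by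
        filter_upwards [Measure.rnDeriv_lt_top νt π] with z hz
        rw [← hftdef] at hz
        refine le_antisymm ?_ (iSup_le fun n =>
          ENNReal.rpow_le_rpow (min_le_left _ _) hq0.le)
        have hN : ft z ≤ ((⌈(ft z).toReal⌉₊ : ℕ) : ℝ≥0∞) := by
          conv_lhs => rw [← ofReal_toReal hz.ne]
          calc ENNReal.ofReal ((ft z).toReal)
              ≤ ENNReal.ofReal ((⌈(ft z).toReal⌉₊ : ℝ)) := ofReal_le_ofReal (Nat.le_ceil _)
          _ = ((⌈(ft z).toReal⌉₊ : ℕ) : ℝ≥0∞) := by rw [ofReal_natCast]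
        exact le_iSup_of_le ⌈(ft z).toReal⌉₊ (by rw [min_eq_left hN])
      have hmon : Monotone fun (n : ℕ) (z : Z) => (min (ft z) (n : ℝ≥0∞)) ^ q := by
        intro i j hij
        intro z
        exact ENNReal.rpow_le_rpow (min_le_min le_rfl (by exact_mod_cast hij)) hq0.le
      rw [lintegral_congr_ae hpt,
        lintegral_iSup (fun n => (hfn_meas n).pow_const q) hmon]
      exact iSup_le hkey
    calc (∫⁻ z, ft z ^ q ∂π) ^ (1/q)
        ≤ (ENNReal.ofReal C ^ (q - 1) * Bq) ^ (1/q) :=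
          ENNReal.rpow_le_rpow hsup (by positivity)
    _ = ENNReal.ofReal C ^ ((q - 1) * (1/q)) * Bq ^ (1/q) := by
        rw [ENNReal.mul_rpow_of_nonneg _ _ (by positivity), ← ENNReal.rpow_mul]
    _ = ENNReal.ofReal C ^ (1 - 1/q) * Bq ^ (1/q) := by
        congr 1
        congr 1
        field_simp
end

section
/- Let L: 𝒴 × ℝ → ℝ be C² in its second variable with ∂²_z L(y,z) > 0, and let Y be a random variable such that z ↦ E[L(Y,z)] is finite, differentiable with derivative E[∂_z L(Y,z)], strictly convex, and admits a unique minimizer ẑ. Let (Y_i)_{i≥1} be i.i.d. copies of Y and ẑ_n the minimizer of z ↦ (1/n)∑_{i=1}^n L(Y_i, z) (assumed to exist). If for every z ∈ ℝ, (1/n)∑_{i=1}^n ∂_z L(Y_i,z) → E[∂_z L(Y,z)] almost surely, then ẑ_n → ẑ almost surely. -/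
open MeasureTheory ProbabilityTheory Filter
open scoped Topology

/-- consistency of the empirical minimizer. If `L(y,·)` is `C²` with positive
second derivative, the population risk `Φ(z) = E[L(Y,z)]` is differentiable with derivative
`E[∂_z L(Y,z)]`, strictly convex with unique minimizer `ẑ`, the empirical minimizers `ẑ_n`
exist, and for every `z` the empirical derivatives converge a.s. to the population derivative,
then `ẑ_n → ẑ` almost surely. -/
theorem empirical_minimizer_consistency
    {Ω 𝒴 : Type*} [MeasurableSpace Ω] [MeasurableSpace 𝒴]
    (P : Measure Ω) [IsProbabilityMeasure P]
    (Yi : ℕ → Ω → 𝒴) (hYmeas : ∀ i, Measurable (Yi i))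
    (hindep : iIndepFun Yi P)
    (ν : Measure 𝒴) [IsProbabilityMeasure ν]
    (hdist : ∀ i, Measure.map (Yi i) P = ν)
    (L : 𝒴 → ℝ → ℝ)
    (hC2 : ∀ y, ContDiff ℝ 2 (L y))
    (hpos : ∀ y z, 0 < iteratedDeriv 2 (L y) z)
    (Φ : ℝ → ℝ) (hΦ : ∀ z, Φ z = ∫ y, L y z ∂ν)
    (hΦderiv : ∀ z, HasDerivAt Φ (∫ y, deriv (L y) z ∂ν) z)
    (hΦconv : StrictConvexOn ℝ Set.univ Φ)
    (zhat : ℝ) (hzhat : ∀ z, Φ zhat ≤ Φ z)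
    (zn : ℕ → Ω → ℝ)
    (hzn : ∀ n ω z, ∑ i ∈ Finset.range (n + 1), L (Yi i ω) (zn n ω)
        ≤ ∑ i ∈ Finset.range (n + 1), L (Yi i ω) z)
    (hlln : ∀ z : ℝ, ∀ᵐ ω ∂P,
      Tendsto (fun n : ℕ => (1 / ((n : ℝ) + 1)) * ∑ i ∈ Finset.range (n + 1), deriv (L (Yi i ω)) z)
        atTop (𝓝 (∫ y, deriv (L y) z ∂ν))) :
    ∀ᵐ ω ∂P, Tendsto (fun n => zn n ω) atTop (𝓝 zhat) := by
  set D : ℝ → ℝ := fun z => ∫ y, deriv (L y) z ∂ν with hD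
  have h2eq : (2 : WithTop ℕ∞) = 1 + 1 := by norm_num
  have hdL : ∀ y, Differentiable ℝ (L y) := fun y =>
    ((hC2 y).of_le (by norm_num : (1 : WithTop ℕ∞) ≤ 2)).differentiable (by norm_num)
  have hdL' : ∀ y, Differentiable ℝ (deriv (L y)) := by
    intro y
    have := (contDiff_succ_iff_deriv.mp ((h2eq ▸ hC2 y : ContDiff ℝ (1+1) (L y)))).2.2
    exact this.differentiable (by norm_num)
  -- D is positive to the right of zhat and negative to the left
  have hDpos : ∀ ε : ℝ, 0 < ε → 0 < D (zhat + ε) := by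
    intro ε hε
    have hlt : slope Φ zhat (zhat + ε) < D (zhat + ε) :=
      hΦconv.slope_lt_of_hasDerivAt (Set.mem_univ _) (Set.mem_univ _)
        (by linarith) (hΦderiv (zhat + ε))
    have hslope : 0 ≤ slope Φ zhat (zhat + ε) := by
      rw [slope_def_field]
      apply div_nonneg
      · linarith [hzhat (zhat + ε)]
      · linarith
    linarith
  have hDneg : ∀ ε : ℝ, 0 < ε → D (zhat - ε) < 0 := by
    intro ε hε
    have hlt : D (zhat - ε) < slope Φ (zhat - ε) zhat :=
      hΦconv.lt_slope_of_hasDerivAt (Set.mem_univ _) (Set.mem_univ _)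
        (by linarith) (hΦderiv (zhat - ε))
    have hslope : slope Φ (zhat - ε) zhat ≤ 0 := by
      rw [slope_def_field]
      apply div_nonpos_of_nonpos_of_nonneg
      · linarith [hzhat (zhat - ε)]
      · linarith
    linarith
  -- per n, ω: the empirical derivative sum G vanishes at zn n ω, and is strictly monotone
  have key : ∀ (n : ℕ) (ω : Ω) (z : ℝ),
      (0 < ∑ i ∈ Finset.range (n + 1), deriv (L (Yi i ω)) z → zn n ω < z) ∧
      (∑ i ∈ Finset.range (n + 1), deriv (L (Yi i ω)) z < 0 → z < zn n ω) := by
    intro n ω z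
    set G : ℝ → ℝ := fun x => ∑ i ∈ Finset.range (n + 1), deriv (L (Yi i ω)) x with hG
    have hGderiv : ∀ x, HasDerivAt (fun x => ∑ i ∈ Finset.range (n + 1), L (Yi i ω) x) (G x) x := by
      intro x
      exact HasDerivAt.fun_sum fun i _ => (hdL (Yi i ω) x).hasDerivAt
    -- G is strictly monotone
    have hGmono : StrictMono G := by
      apply strictMono_of_deriv_pos
      intro x
      have hGd : HasDerivAt G (∑ i ∈ Finset.range (n + 1),
          deriv (deriv (L (Yi i ω))) x) x :=
        HasDerivAt.fun_sum fun i _ => (hdL' (Yi i ω) x).hasDerivAt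
      rw [hGd.deriv]
      apply Finset.sum_pos
      · intro i _
        have := hpos (Yi i ω) x
        rwa [iteratedDeriv_succ, iteratedDeriv_one] at this
      · exact Finset.nonempty_range_add_one
    -- G (zn n ω) = 0
    have hGzero : G (zn n ω) = 0 := by
      have hmin : IsLocalMin (fun x => ∑ i ∈ Finset.range (n + 1), L (Yi i ω) x) (zn n ω) := by
        apply IsMinOn.isLocalMin _ (by simp : Set.univ ∈ 𝓝 (zn n ω))
        intro x _
        exact hzn n ω x
      exact hmin.hasDerivAt_eq_zero (hGderiv (zn n ω))
    constructor
    · intro hpos'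
      by_contra h
      push_neg at h
      have := hGmono.le_iff_le.mpr h
      rw [hGzero] at this
      exact absurd (lt_of_lt_of_le hpos' this) (lt_irrefl 0)
    · intro hneg
      by_contra h
      push_neg at h
      have := hGmono.le_iff_le.mpr h
      rw [hGzero] at this
      exact absurd (lt_of_le_of_lt this hneg) (lt_irrefl 0)
  -- combine LLN along a countable family of ε's
  have hae : ∀ᵐ ω ∂P, ∀ k : ℕ,
      (Tendsto (fun n : ℕ => (1 / ((n : ℝ) + 1)) *
          ∑ i ∈ Finset.range (n + 1), deriv (L (Yi i ω)) (zhat + 1 / (k + 1)))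
        atTop (𝓝 (D (zhat + 1 / (k + 1))))) ∧
      (Tendsto (fun n : ℕ => (1 / ((n : ℝ) + 1)) *
          ∑ i ∈ Finset.range (n + 1), deriv (L (Yi i ω)) (zhat - 1 / (k + 1)))
        atTop (𝓝 (D (zhat - 1 / (k + 1))))) := by
    rw [ae_all_iff]
    intro k
    filter_upwards [hlln (zhat + 1 / (k + 1)), hlln (zhat - 1 / (k + 1))] with ω h1 h2
    exact ⟨h1, h2⟩
  filter_upwards [hae] with ω hω
  rw [Metric.tendsto_atTop]
  intro ε hε
  obtain ⟨k, hk⟩ := exists_nat_one_div_lt hε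
  have hkpos : (0 : ℝ) < 1 / (k + 1) := by positivity
  obtain ⟨h1, h2⟩ := hω k
  have he1 : ∀ᶠ n : ℕ in atTop, 0 < (1 / ((n : ℝ) + 1)) *
      ∑ i ∈ Finset.range (n + 1), deriv (L (Yi i ω)) (zhat + 1 / (k + 1)) :=
    h1.eventually_const_lt (hDpos _ hkpos)
  have he2 : ∀ᶠ n : ℕ in atTop, (1 / ((n : ℝ) + 1)) *
      ∑ i ∈ Finset.range (n + 1), deriv (L (Yi i ω)) (zhat - 1 / (k + 1)) < 0 :=
    h2.eventually_lt_const (hDneg _ hkpos)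
  obtain ⟨N, hN⟩ := (he1.and he2).exists_forall_of_atTop
  refine ⟨N, fun n hn => ?_⟩
  obtain ⟨hn1, hn2⟩ := hN n hn
  have hninv : (0 : ℝ) < 1 / ((n : ℝ) + 1) := by positivity
  have hs1 : 0 < ∑ i ∈ Finset.range (n + 1), deriv (L (Yi i ω)) (zhat + 1 / (k + 1)) := by
    by_contra h
    push_neg at h
    have : (1 / ((n : ℝ) + 1)) *
        ∑ i ∈ Finset.range (n + 1), deriv (L (Yi i ω)) (zhat + 1 / (k + 1)) ≤ 0 :=
      mul_nonpos_of_nonneg_of_nonpos hninv.le h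
    linarith
  have hs2 : ∑ i ∈ Finset.range (n + 1), deriv (L (Yi i ω)) (zhat - 1 / (k + 1)) < 0 := by
    by_contra h
    push_neg at h
    have : 0 ≤ (1 / ((n : ℝ) + 1)) *
        ∑ i ∈ Finset.range (n + 1), deriv (L (Yi i ω)) (zhat - 1 / (k + 1)) :=
      mul_nonneg hninv.le h
    linarith
  have hlt1 := (key n ω (zhat + 1 / (k + 1))).1 hs1
  have hlt2 := (key n ω (zhat - 1 / (k + 1))).2 hs2
  rw [Real.dist_eq, abs_lt]
  constructor <;> [linarith; linarith]
end

section
/- Let H be a Hilbert space, F* ∈ H, and (F_t)_{t≥0} a C¹ curve in H such that d/dt ‖F_t − F*‖² = −φ(F_t) where φ: H → [0,∞). Suppose there exist c > 0, a weakly open set V containing a weak adherent point ℓ of (F_t) with φ > c/2 on V, a smaller weak neighborhood W ⊂ V of ℓ defined by strict inequalities with half the margin, a constant C with ‖dF_t/dt‖ ≤ C for all t, and that {t : F_t ∈ W} is unbounded. Then ∫₀^∞ φ(F_t) dt = ∞. -/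
open MeasureTheory
open scoped RealInnerProductSpace

/-- If `t ↦ ‖F_t − F*‖²` has derivative `−φ(F_t)` with `φ ≥ 0`, `φ > c/2` on
the weakly open set `V = {f : ⟪f−ℓ,g_i⟫ < ε}`, `W = {f : ⟪f−ℓ,g_i⟫ < ε/2} ⊆ V`, the speed
`‖dF_t/dt‖` is bounded by `C`, and `{t : F_t ∈ W}` is unbounded, then
`∫₀^∞ φ(F_t) dt = ∞`. -/
theorem time_in_weak_neighborhood_infinite
    {H : Type*} [NormedAddCommGroup H] [InnerProductSpace ℝ H]
    (F : ℝ → H) (F' : ℝ → H) (Fstar : H) (φ : H → ℝ)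
    (hφ0 : ∀ f, 0 ≤ φ f)
    (hode : ∀ t : ℝ, HasDerivAt (fun s => ‖F s - Fstar‖ ^ 2) (-(φ (F t))) t)
    (hF' : ∀ t : ℝ, HasDerivAt F (F' t) t)
    (C : ℝ) (hC : 0 < C) (hF'bound : ∀ t, ‖F' t‖ ≤ C)
    (k : ℕ) (g : Fin k → H) (hg : ∀ i, ‖g i‖ ≤ 1)
    (ℓ : H) (ε : ℝ) (hε : 0 < ε)
    (V W : Set H)
    (hV : V = {f | ∀ i, ⟪f - ℓ, g i⟫ < ε})
    (hW : W = {f | ∀ i, ⟪f - ℓ, g i⟫ < ε / 2})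
    (c : ℝ) (hc : 0 < c) (hφV : ∀ f ∈ V, c / 2 < φ f)
    (hunbdd : ∀ T : ℝ, ∃ t, T ≤ t ∧ 0 ≤ t ∧ F t ∈ W) :
    ∫⁻ t in Set.Ioi (0 : ℝ), ENNReal.ofReal (φ (F t)) = ⊤ := by
  have hδ : 0 < ε / (2 * C) := by positivity
  set δ := ε / (2 * C) with hδdef
  -- Lipschitz bound on F
  have hlip : ∀ s u : ℝ, ‖F s - F u‖ ≤ C * ‖s - u‖ := by
    intro s u
    exact convex_univ.norm_image_sub_le_of_norm_hasDerivWithin_le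
      (fun x _ => (hF' x).hasDerivWithinAt) (fun x _ => hF'bound x)
      (Set.mem_univ u) (Set.mem_univ s)
  -- geometric lemma: staying in V for time δ after visiting W
  have hVmem : ∀ u : ℝ, F u ∈ W → ∀ s ∈ Set.Ioc u (u + δ), F s ∈ V := by
    intro u hFu s hs
    rw [hV]; intro i
    have h1 : ⟪F u - ℓ, g i⟫ < ε / 2 := by rw [hW] at hFu; exact hFu i
    have h2 : ⟪F s - F u, g i⟫ ≤ ε / 2 := by
      calc ⟪F s - F u, g i⟫ ≤ ‖F s - F u‖ * ‖g i‖ := real_inner_le_norm _ _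
        _ ≤ (C * ‖s - u‖) * 1 :=
            mul_le_mul (hlip s u) (hg i) (norm_nonneg _) (by positivity)
        _ = C * |s - u| := by rw [mul_one, Real.norm_eq_abs]
        _ ≤ C * δ := by
            apply mul_le_mul_of_nonneg_left _ hC.le
            rw [abs_le]; constructor <;> [linarith [hs.1.le, hs.2]; linarith [hs.1.le, hs.2]]
        _ = ε / 2 := by rw [hδdef]; field_simp
    have heq : F s - ℓ = (F s - F u) + (F u - ℓ) := by abel
    rw [heq, inner_add_left]; linarith
  -- recursive sequence of visit times
  set t : ℕ → ℝ := fun n =>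
    Nat.rec ((hunbdd 0).choose) (fun _ prev => (hunbdd (prev + δ)).choose) n with ht
  have ht0 : ∀ n, 0 ≤ t n ∧ F (t n) ∈ W := by
    intro n; cases n with
    | zero => exact ⟨(hunbdd 0).choose_spec.2.1, (hunbdd 0).choose_spec.2.2⟩
    | succ n => exact ⟨(hunbdd (t n + δ)).choose_spec.2.1, (hunbdd (t n + δ)).choose_spec.2.2⟩
  have hstep : ∀ n, t n + δ ≤ t (n + 1) := fun n => (hunbdd (t n + δ)).choose_spec.1
  have hgap : ∀ m n, m < n → t m + δ ≤ t n := by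
    intro m n hmn
    induction n with
    | zero => omega
    | succ n ih =>
      rcases Nat.lt_succ_iff_lt_or_eq.1 hmn with h | h
      · exact (ih h).trans ((le_add_of_nonneg_right hδ.le).trans (hstep n))
      · subst h; exact hstep m
  have hdisj : Pairwise (Function.onFun Disjoint (fun n => Set.Ioc (t n) (t n + δ))) := by
    intro m n hmn
    rcases hmn.lt_or_gt with h | h
    · exact Set.Ioc_disjoint_Ioc.2 (le_max_of_le_right ((min_le_left _ _).trans (hgap m n h)))
    · exact Set.Ioc_disjoint_Ioc.2 (le_max_of_le_left ((min_le_right _ _).trans (hgap n m h)))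
  have hsets : ∀ n, Set.Ioc (t n) (t n + δ) ⊆ Set.Ioi (0 : ℝ) :=
    fun n s hs => lt_of_le_of_lt (ht0 n).1 hs.1
  have hlow : ∀ n, ENNReal.ofReal (c / 2) * ENNReal.ofReal δ
      ≤ ∫⁻ s in Set.Ioc (t n) (t n + δ), ENNReal.ofReal (φ (F s)) := by
    intro n
    have hpt : ∀ s ∈ Set.Ioc (t n) (t n + δ),
        ENNReal.ofReal (c / 2) ≤ ENNReal.ofReal (φ (F s)) := fun s hs =>
      ENNReal.ofReal_le_ofReal (hφV _ (hVmem (t n) (ht0 n).2 s hs)).le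
    calc ENNReal.ofReal (c / 2) * ENNReal.ofReal δ
        = ∫⁻ _ in Set.Ioc (t n) (t n + δ), ENNReal.ofReal (c / 2) := by
          rw [setLIntegral_const, Real.volume_Ioc]
          congr 2; ring
      _ ≤ _ := setLIntegral_mono' measurableSet_Ioc hpt
  have hsum : (∑' _ : ℕ, ENNReal.ofReal (c / 2) * ENNReal.ofReal δ) = ⊤ := by
    apply ENNReal.tsum_const_eq_top_of_ne_zero
    exact (ENNReal.mul_pos (ENNReal.ofReal_pos.2 (by positivity)).ne'
      (ENNReal.ofReal_pos.2 hδ).ne').ne'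
  refine eq_top_iff.2 ?_
  calc (⊤ : ENNReal) = ∑' _ : ℕ, ENNReal.ofReal (c / 2) * ENNReal.ofReal δ := hsum.symm
    _ ≤ ∑' n, ∫⁻ s in Set.Ioc (t n) (t n + δ), ENNReal.ofReal (φ (F s)) :=
        ENNReal.tsum_le_tsum hlow
    _ = ∫⁻ s in ⋃ n, Set.Ioc (t n) (t n + δ), ENNReal.ofReal (φ (F s)) :=
        (lintegral_iUnion (fun n => measurableSet_Ioc) hdisj _).symm
    _ ≤ ∫⁻ s in Set.Ioi 0, ENNReal.ofReal (φ (F s)) :=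
        lintegral_mono_set (Set.iUnion_subset hsets)
end

section
/- Let H be a Hilbert space and (F_t)_{t≥0} a curve in H with ‖F_t − F*‖ nonincreasing in t, contained in a closed ball B, satisfying d/dt ‖F_t − F*‖² = −φ(F_t) with φ: B → [0,∞) weakly continuous on B and φ(F) = 0 iff F ∈ F* + V^⊥ for a closed subspace V ⊂ H, where additionally F_t ∈ F_0 + V for all t and ‖dF_t/dt‖ is bounded. Then F_t converges weakly to the orthogonal projection of F* onto the affine subspace F_0 + V, i.e., F_t ⇀ F_0 + P_V(F* − F_0). -/
open Filter
open scoped RealInnerProductSpace Topology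

/-- Weak sequential compactness of bounded sequences in a real Hilbert space. -/
lemma exists_weak_cluster {H : Type*} [NormedAddCommGroup H] [InnerProductSpace ℝ H]
    [CompleteSpace H] (u : ℕ → H) (K : ℝ) (hu : ∀ n, ‖u n‖ ≤ K) :
    ∃ (x : H) (ψ : ℕ → ℕ), StrictMono ψ ∧ ‖x‖ ≤ K ∧
      ∀ g : H, Tendsto (fun k => ⟪u (ψ k), g⟫) atTop (𝓝 ⟪x, g⟫) := by
  have hK0 : (0:ℝ) ≤ K := (norm_nonneg _).trans (hu 0)
  set M : Submodule ℝ H := (Submodule.span ℝ (Set.range u)).topologicalClosure with hM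
  have hMclosed : IsClosed (M : Set H) := Submodule.isClosed_topologicalClosure _
  haveI : CompleteSpace M := hMclosed.completeSpace_coe
  have huM : ∀ n, u n ∈ M := fun n =>
    Submodule.le_topologicalClosure _ (Submodule.subset_span ⟨n, rfl⟩)
  -- separability of M
  have hsep : TopologicalSpace.IsSeparable (M : Set H) := by
    have h1 : TopologicalSpace.IsSeparable (Set.range u) :=
      (Set.countable_range u).isSeparable
    have h2 := h1.span (R := ℝ)
    simpa [hM, Submodule.topologicalClosure_coe] using h2.closure
  obtain ⟨c, hccount, hcsub⟩ := hsep
  have hc'count : (insert (0:H) c).Countable := hccount.insert 0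
  obtain ⟨e, hce⟩ := hc'count.exists_eq_range ⟨0, Set.mem_insert 0 c⟩
  have hMe : (M : Set H) ⊆ closure (Set.range e) := by
    rw [← hce]
    exact hcsub.trans (closure_mono (Set.subset_insert _ _))
  -- diagonal extraction via compactness of a product of intervals
  have hS : IsCompact (Set.pi Set.univ fun j : ℕ => Set.Icc (-(K * ‖e j‖)) (K * ‖e j‖)) :=
    isCompact_univ_pi fun j => isCompact_Icc
  have hmemS : ∀ n, (fun j => ⟪u n, e j⟫) ∈
      Set.pi Set.univ fun j : ℕ => Set.Icc (-(K * ‖e j‖)) (K * ‖e j‖) := by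
    intro n
    intro j _
    have := abs_real_inner_le_norm (u n) (e j)
    have hb : ‖u n‖ * ‖e j‖ ≤ K * ‖e j‖ :=
      mul_le_mul_of_nonneg_right (hu n) (norm_nonneg _)
    constructor <;> [linarith [neg_abs_le ⟪u n, e j⟫]; linarith [le_abs_self ⟪u n, e j⟫]]
  obtain ⟨a, -, ψ, hψ, hconv⟩ := hS.isSeqCompact hmemS
  rw [tendsto_pi_nhds] at hconv
  -- every inner product ⟪u (ψ k), g⟫ converges
  have key : ∀ g : H, ∃ r : ℝ, Tendsto (fun k => ⟪u (ψ k), g⟫) atTop (𝓝 r) := by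
    intro g
    have hPg : ∀ n, ⟪u n, g⟫ = ⟪u n, (Submodule.orthogonalProjectionOnto M g : H)⟫ := by
      intro n
      have horth : g - (Submodule.orthogonalProjectionOnto M g : H) ∈ Mᗮ :=
        Submodule.sub_starProjection_mem_orthogonal (K := M) g
      have := horth (u n) (huM n)
      rw [inner_sub_right] at this
      have h2 := this
      linarith
    set P : H := (Submodule.orthogonalProjectionOnto M g : H) with hP
    have hcau : CauchySeq (fun k => ⟪u (ψ k), P⟫) := by
      rw [Metric.cauchySeq_iff']
      intro ε hε
      -- approximate P by some e j
      have hPM : P ∈ (M : Set H) := (Submodule.orthogonalProjectionOnto M g).2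
      have := hMe hPM
      rw [Metric.mem_closure_iff] at this
      obtain ⟨b, hbmem, hbdist⟩ := this (ε / (4 * (K + 1))) (by positivity)
      obtain ⟨j, rfl⟩ := hbmem
      have hPej : ‖P - e j‖ < ε / (4 * (K + 1)) := by
        rwa [dist_eq_norm] at hbdist
      have hsmall : ∀ n, |⟪u n, P - e j⟫| < ε / 4 := by
        intro n
        calc |⟪u n, P - e j⟫| ≤ ‖u n‖ * ‖P - e j‖ := abs_real_inner_le_norm _ _
          _ ≤ K * ‖P - e j‖ := mul_le_mul_of_nonneg_right (hu n) (norm_nonneg _)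
          _ ≤ (K + 1) * ‖P - e j‖ := by nlinarith [norm_nonneg (P - e j)]
          _ < (K + 1) * (ε / (4 * (K + 1))) := by
              apply mul_lt_mul_of_pos_left hPej (by linarith)
          _ = ε / 4 := by field_simp
      -- Cauchy for coordinate j
      have hcj : CauchySeq (fun k => ⟪u (ψ k), e j⟫) := (hconv j).cauchySeq
      rw [Metric.cauchySeq_iff'] at hcj
      obtain ⟨N, hN⟩ := hcj (ε / 4) (by positivity)
      refine ⟨N, fun n hn => ?_⟩
      have h1 := hsmall (ψ n)
      have h2 := hsmall (ψ N)
      have h3 := hN n hn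
      rw [Real.dist_eq] at h3 ⊢
      have hid : ⟪u (ψ n), P⟫ - ⟪u (ψ N), P⟫ =
          ⟪u (ψ n), P - e j⟫ + (⟪u (ψ n), e j⟫ - ⟪u (ψ N), e j⟫) - ⟪u (ψ N), P - e j⟫ := by
        simp [inner_sub_right]
      rw [hid]
      calc |⟪u (ψ n), P - e j⟫ + (⟪u (ψ n), e j⟫ - ⟪u (ψ N), e j⟫) - ⟪u (ψ N), P - e j⟫|
          ≤ |⟪u (ψ n), P - e j⟫ + (⟪u (ψ n), e j⟫ - ⟪u (ψ N), e j⟫)| + |⟪u (ψ N), P - e j⟫| :=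
            abs_sub _ _
        _ ≤ |⟪u (ψ n), P - e j⟫| + |⟪u (ψ n), e j⟫ - ⟪u (ψ N), e j⟫| + |⟪u (ψ N), P - e j⟫| := by
            gcongr; exact abs_add_le _ _
        _ < ε := by linarith
    obtain ⟨r, hr⟩ := cauchySeq_tendsto_of_complete hcau
    exact ⟨r, by simpa only [← hPg] using hr⟩
  -- build the weak limit via Riesz representation
  choose r hr using key
  have hadd : ∀ g₁ g₂ : H, r (g₁ + g₂) = r g₁ + r g₂ := by
    intro g₁ g₂
    refine tendsto_nhds_unique (hr (g₁ + g₂)) ?_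
    simpa [inner_add_right] using (hr g₁).add (hr g₂)
  have hsmul : ∀ (c : ℝ) (g : H), r (c • g) = c * r g := by
    intro c g
    refine tendsto_nhds_unique (hr (c • g)) ?_
    simpa [real_inner_smul_right] using (hr g).const_mul c
  have hbound : ∀ g : H, |r g| ≤ K * ‖g‖ := by
    intro g
    have h1 : Tendsto (fun k => |⟪u (ψ k), g⟫|) atTop (𝓝 |r g|) := (hr g).abs
    refine le_of_tendsto h1 (Eventually.of_forall fun k => ?_)
    calc |⟪u (ψ k), g⟫| ≤ ‖u (ψ k)‖ * ‖g‖ := abs_real_inner_le_norm _ _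
      _ ≤ K * ‖g‖ := mul_le_mul_of_nonneg_right (hu _) (norm_nonneg _)
  let ℓ : H →L[ℝ] ℝ := LinearMap.mkContinuous
    { toFun := r, map_add' := hadd, map_smul' := hsmul } K
    (fun g => by simpa [Real.norm_eq_abs] using hbound g)
  set x : H := (InnerProductSpace.toDual ℝ H).symm ℓ with hx
  have hxg : ∀ g : H, ⟪x, g⟫ = r g := by
    intro g
    rw [hx, InnerProductSpace.toDual_symm_apply]
    rfl
  have hweak : ∀ g : H, Tendsto (fun k => ⟪u (ψ k), g⟫) atTop (𝓝 ⟪x, g⟫) := by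
    intro g; rw [hxg g]; exact hr g
  refine ⟨x, ψ, hψ, ?_, hweak⟩
  -- norm bound on x
  have h1 : ‖x‖ ^ 2 ≤ K * ‖x‖ := by
    have h2 : Tendsto (fun k => ⟪u (ψ k), x⟫) atTop (𝓝 ⟪x, x⟫) := hweak x
    rw [real_inner_self_eq_norm_sq] at h2
    refine le_of_tendsto h2 (Eventually.of_forall fun k => ?_)
    calc ⟪u (ψ k), x⟫ ≤ ‖u (ψ k)‖ * ‖x‖ := real_inner_le_norm _ _
      _ ≤ K * ‖x‖ := mul_le_mul_of_nonneg_right (hu _) (norm_nonneg _)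
  nlinarith [norm_nonneg x]

/-- Abstract weak consistency. If `‖F_t − F*‖` is nonincreasing, the
trajectory stays in a closed ball of radius `R`, `d/dt ‖F_t − F*‖² = −φ(F_t)` with `φ ≥ 0`
weakly (sequentially) continuous on the ball and vanishing exactly on `F* + V^⊥`, the curve
stays in the affine space `F_0 + V` and has bounded speed, then `F_t` converges weakly to
`F_0 + P_V(F* − F_0)`, the orthogonal projection of `F*` onto `F_0 + V`. -/
theorem weak_convergence_to_projection
    {H : Type*} [NormedAddCommGroup H] [InnerProductSpace ℝ H] [CompleteSpace H]
    (V : Submodule ℝ H) [CompleteSpace V]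
    (F F' : ℝ → H) (Fstar : H) (φ : H → ℝ) (R : ℝ)
    (hball : ∀ t : ℝ, 0 ≤ t → ‖F t‖ ≤ R)
    (hmono : AntitoneOn (fun t => ‖F t - Fstar‖) (Set.Ici 0))
    (hode : ∀ t : ℝ, HasDerivAt (fun s => ‖F s - Fstar‖ ^ 2) (-(φ (F t))) t)
    (hφ0 : ∀ f : H, ‖f‖ ≤ R → 0 ≤ φ f)
    (hφzero : ∀ f : H, ‖f‖ ≤ R → (φ f = 0 ↔ ∃ w ∈ Vᗮ, f = Fstar + w))
    (hφweakcont : ∀ (u : ℕ → H) (x : H), (∀ n, ‖u n‖ ≤ R) → ‖x‖ ≤ R →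
      (∀ g : H, Tendsto (fun n => ⟪u n, g⟫) atTop (𝓝 ⟪x, g⟫)) →
      Tendsto (fun n => φ (u n)) atTop (𝓝 (φ x)))
    (hmem : ∀ t : ℝ, 0 ≤ t → F t - F 0 ∈ V)
    (hF' : ∀ t : ℝ, HasDerivAt F (F' t) t)
    (C : ℝ) (hC : ∀ t, ‖F' t‖ ≤ C) :
    ∀ g : H, Tendsto (fun t : ℝ => ⟪F t, g⟫) atTop
      (𝓝 ⟪F 0 + (Submodule.orthogonalProjectionOnto V (Fstar - F 0) : H), g⟫) := by
  set L : H := F 0 + (Submodule.orthogonalProjectionOnto V (Fstar - F 0) : H) with hL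
  have hC0 : (0:ℝ) ≤ C := (norm_nonneg _).trans (hC 0)
  have Fcont : Continuous F := by
    rw [continuous_iff_continuousAt]; exact fun t => (hF' t).continuousAt
  -- Lipschitz bound
  have hlip : ∀ a b : ℝ, ‖F b - F a‖ ≤ C * |b - a| := by
    intro a b
    have := Convex.norm_image_sub_le_of_norm_hasDerivWithin_le
      (f := F) (f' := F') (s := Set.univ) (C := C)
      (fun t _ => (hF' t).hasDerivWithinAt) (fun t _ => hC t)
      convex_univ (Set.mem_univ a) (Set.mem_univ b)
    simpa [Real.norm_eq_abs] using this
  -- G = squared distance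
  set G : ℝ → ℝ := fun t => ‖F t - Fstar‖ ^ 2 with hG
  have hGnonneg : ∀ t, 0 ≤ G t := fun t => sq_nonneg _
  have hGanti : Antitone (fun t => G (max t 0)) := by
    intro s t hst
    have h := hmono (Set.mem_Ici.mpr (le_max_right s 0)) (Set.mem_Ici.mpr (le_max_right t 0))
      (max_le_max hst le_rfl)
    exact pow_le_pow_left₀ (norm_nonneg _) h 2
  obtain ⟨gl, hGtend⟩ : ∃ gl, Tendsto (fun t => G (max t 0)) atTop (𝓝 gl) :=
    ⟨_, tendsto_atTop_ciInf hGanti ⟨0, by rintro y ⟨t, rfl⟩; exact hGnonneg _⟩⟩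
  -- continuity of φ ∘ F on [0, ∞)
  have hφF : ContinuousOn (fun s => φ (F s)) (Set.Ici (0:ℝ)) := by
    intro t ht
    have : Tendsto (fun s => φ (F s)) (𝓝[Set.Ici (0:ℝ)] t) (𝓝 (φ (F t))) := by
      rw [tendsto_iff_seq_tendsto]
      intro s hs
      rw [tendsto_nhdsWithin_iff] at hs
      obtain ⟨hs1, hs2⟩ := hs
      set w : ℕ → H := fun n => if 0 ≤ s n then F (s n) else F t with hw
      have hwR : ∀ n, ‖w n‖ ≤ R := by
        intro n; by_cases h : 0 ≤ s n
        · simp only [hw, if_pos h]; exact hball _ h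
        · simp only [hw, if_neg h]; exact hball t ht
      have hwlim : Tendsto w atTop (𝓝 (F t)) := by
        have h1 : Tendsto (fun n => F (s n)) atTop (𝓝 (F t)) :=
          (Fcont.tendsto t).comp hs1
        refine h1.congr' ?_
        filter_upwards [hs2] with n hn
        simp [hw, Set.mem_Ici.mp hn]
      have hwweak : ∀ g : H, Tendsto (fun n => ⟪w n, g⟫) atTop (𝓝 ⟪F t, g⟫) :=
        fun g => (hwlim.inner tendsto_const_nhds)
      have := hφweakcont w (F t) hwR (hball t ht) hwweak
      refine this.congr' ?_
      filter_upwards [hs2] with n hn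
      simp [hw, Set.mem_Ici.mp hn]
    exact this
  -- integral identity
  have hint : ∀ a b : ℝ, 0 ≤ a → a ≤ b → ∫ t in a..b, φ (F t) = G a - G b := by
    intro a b ha hab
    have hicc : Set.uIcc a b ⊆ Set.Ici (0:ℝ) := by
      rw [Set.uIcc_of_le hab]
      exact fun t htt => le_trans ha htt.1
    have hcont : ContinuousOn (fun t => φ (F t)) (Set.uIcc a b) := hφF.mono hicc
    have hii : IntervalIntegrable (fun t => φ (F t)) MeasureTheory.volume a b :=
      hcont.intervalIntegrable
    have h1 : ∫ t in a..b, -φ (F t) = G b - G a :=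
      intervalIntegral.integral_eq_sub_of_hasDerivAt (fun t _ => hode t) hii.neg
    rw [intervalIntegral.integral_neg] at h1
    linarith
  -- key cluster point lemma
  have hcluster : ∀ (t : ℕ → ℝ), (∀ n, 0 ≤ t n) → Tendsto t atTop atTop →
      ∀ x : H, ‖x‖ ≤ R → (∀ g, Tendsto (fun n => ⟪F (t n), g⟫) atTop (𝓝 ⟪x, g⟫)) → x = L := by
    intro t ht0 ht x hxR hxw
    have hφx : φ x = 0 := by
      by_contra hcne
      have hcpos : 0 < φ x := lt_of_le_of_ne (hφ0 x hxR) (Ne.symm hcne)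
      set c := φ x with hcdef
      obtain ⟨δ', hδ'pos, hδ'⟩ : ∃ δ' > 0, ∀ y : H, ‖y‖ ≤ R → ‖y - x‖ ≤ δ' → c/2 ≤ φ y := by
        by_contra hcon
        push_neg at hcon
        have hy : ∀ n : ℕ, ∃ y : H, ‖y‖ ≤ R ∧ ‖y - x‖ ≤ 1/(n+1) ∧ φ y < c/2 := by
          intro n
          obtain ⟨y, h1, h2, h3⟩ := hcon (1/(n+1)) (by positivity)
          exact ⟨y, h1, h2, h3⟩
        choose y hy1 hy2 hy3 using hy
        have hylim : Tendsto y atTop (𝓝 x) := by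
          rw [tendsto_iff_norm_sub_tendsto_zero]
          refine squeeze_zero (fun n => norm_nonneg _) hy2 ?_
          exact tendsto_one_div_add_atTop_nhds_zero_nat
        have hyweak : ∀ g, Tendsto (fun n => ⟪y n, g⟫) atTop (𝓝 ⟪x, g⟫) :=
          fun g => hylim.inner tendsto_const_nhds
        have hφy := hφweakcont y x hy1 hxR hyweak
        have : c ≤ c/2 := le_of_tendsto hφy (Eventually.of_forall fun n => (hy3 n).le)
        linarith
      set δ := δ' / (C+1) with hδdef
      have hδpos : 0 < δ := by positivity
      have hmin : ∀ n : ℕ, ∃ s ∈ Set.Icc (t n) (t n + δ),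
          ∀ s' ∈ Set.Icc (t n) (t n + δ), φ (F s) ≤ φ (F s') := by
        intro n
        have hne : (Set.Icc (t n) (t n + δ)).Nonempty := ⟨t n, le_refl _, by linarith⟩
        have hsub : Set.Icc (t n) (t n + δ) ⊆ Set.Ici (0:ℝ) := fun s hs =>
          le_trans (ht0 n) hs.1
        obtain ⟨sm, hsm, hmin'⟩ := isCompact_Icc.exists_isMinOn hne (hφF.mono hsub)
        exact ⟨sm, hsm, fun s' hs' => (isMinOn_iff.mp hmin') s' hs'⟩
      choose s hs hsmin using hmin
      set y : ℕ → H := fun n => F (s n) with hydef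
      have hs0 : ∀ n, 0 ≤ s n := fun n => le_trans (ht0 n) (hs n).1
      have hεtend : Tendsto (fun n => G (t n) - G (t n + δ)) atTop (𝓝 0) := by
        have h1 : Tendsto (fun n => G (max (t n) 0)) atTop (𝓝 gl) := hGtend.comp ht
        have h2 : Tendsto (fun n => G (max (t n + δ) 0)) atTop (𝓝 gl) :=
          hGtend.comp (tendsto_atTop_add_const_right _ δ ht)
        have h3 : (fun n => G (t n) - G (t n + δ))
            = fun n => G (max (t n) 0) - G (max (t n + δ) 0) := by
          funext n
          rw [max_eq_left (ht0 n), max_eq_left (by linarith [ht0 n, hδpos.le] : (0:ℝ) ≤ t n + δ)]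
        rw [h3]
        simpa using h1.sub h2
      have hbd : ∀ n, φ (y n) ≤ (G (t n) - G (t n + δ)) / δ := by
        intro n
        rw [le_div_iff₀ hδpos]
        have hii : IntervalIntegrable (fun s' => φ (F s')) MeasureTheory.volume (t n) (t n + δ) := by
          have hsub2 : Set.uIcc (t n) (t n + δ) ⊆ Set.Ici (0:ℝ) := by
            rw [Set.uIcc_of_le (by linarith : t n ≤ t n + δ)]
            exact fun s' hs' => le_trans (ht0 n) hs'.1
          exact (hφF.mono hsub2).intervalIntegrable
        have hconst : ∫ s' in (t n)..(t n + δ), φ (y n)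
            ≤ ∫ s' in (t n)..(t n + δ), φ (F s') := by
          apply intervalIntegral.integral_mono_on (by linarith) intervalIntegrable_const hii
          exact fun s' hs' => hsmin n s' hs'
        rw [intervalIntegral.integral_const, hint (t n) (t n + δ) (ht0 n) (by linarith)] at hconst
        simp only [add_sub_cancel_left, smul_eq_mul] at hconst
        nlinarith [hconst]
      have hyR : ∀ n, ‖y n‖ ≤ R := fun n => hball _ (hs0 n)
      obtain ⟨z, ψ, hψ, hzR, hzw⟩ := exists_weak_cluster y R hyR
      have hφz := hφweakcont (fun k => y (ψ k)) z (fun k => hyR _) hzR hzw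
      have hφz0 : Tendsto (fun k => φ (y (ψ k))) atTop (𝓝 0) := by
        have h0 : Tendsto (fun n => φ (y n)) atTop (𝓝 0) := by
          refine squeeze_zero (fun n => hφ0 _ (hyR n)) hbd ?_
          simpa using hεtend.div_const δ
        exact h0.comp hψ.tendsto_atTop
      have hφzz : φ z = 0 := tendsto_nhds_unique hφz hφz0
      have hzx : ‖z - x‖ ≤ C * δ := by
        have hterm : ∀ k, (⟪y (ψ k) - F (t (ψ k)), z - x⟫:ℝ) ≤ C * δ * ‖z - x‖ := by
          intro k
          calc (⟪y (ψ k) - F (t (ψ k)), z - x⟫:ℝ)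
              ≤ ‖y (ψ k) - F (t (ψ k))‖ * ‖z - x‖ := real_inner_le_norm _ _
            _ ≤ (C * δ) * ‖z - x‖ := by
                apply mul_le_mul_of_nonneg_right _ (norm_nonneg _)
                calc ‖F (s (ψ k)) - F (t (ψ k))‖ ≤ C * |s (ψ k) - t (ψ k)| := hlip _ _
                  _ ≤ C * δ := by
                      apply mul_le_mul_of_nonneg_left _ hC0
                      rw [abs_le]
                      constructor
                      · linarith [(hs (ψ k)).1, hδpos.le]
                      · linarith [(hs (ψ k)).2]
        have hlim : Tendsto (fun k => (⟪y (ψ k) - F (t (ψ k)), z - x⟫:ℝ)) atTop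
            (𝓝 ⟪z - x, z - x⟫) := by
          have h1 := hzw (z - x)
          have h2 := (hxw (z - x)).comp hψ.tendsto_atTop
          have h3 := h1.sub h2
          have h4 : (⟪z, z - x⟫:ℝ) - ⟪x, z - x⟫ = ⟪z - x, z - x⟫ := by
            rw [inner_sub_left]
          rw [h4] at h3
          refine h3.congr fun k => ?_
          rw [inner_sub_left]
          rfl
        have hfin := le_of_tendsto hlim (Eventually.of_forall hterm)
        rw [real_inner_self_eq_norm_sq] at hfin
        nlinarith [norm_nonneg (z - x), mul_nonneg hC0 hδpos.le]
      have hCδ : C * δ ≤ δ' := by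
        rw [hδdef, mul_div_assoc']
        rw [div_le_iff₀ (by linarith : (0:ℝ) < C+1)]
        nlinarith
      have := hδ' z hzR (hzx.trans hCδ)
      rw [hφzz] at this
      linarith
    obtain ⟨w, hwV, hxweq⟩ := (hφzero x hxR).mp hφx
    have hxF0 : x - F 0 ∈ V := by
      have horth : ∀ g ∈ Vᗮ, (⟪x - F 0, g⟫:ℝ) = 0 := by
        intro g hg
        have hconst : ∀ n, (⟪F (t n), g⟫:ℝ) = ⟪F 0, g⟫ := by
          intro n
          have h1 : (⟪F (t n) - F 0, g⟫:ℝ) = 0 :=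
            (Submodule.mem_orthogonal V g).mp hg _ (hmem _ (ht0 n))
          rw [inner_sub_left] at h1
          linarith
        have h2 : Tendsto (fun n => (⟪F (t n), g⟫:ℝ)) atTop (𝓝 ⟪x, g⟫) := hxw g
        have h3 : Tendsto (fun n => (⟪F (t n), g⟫:ℝ)) atTop (𝓝 ⟪F 0, g⟫) := by
          refine Tendsto.congr (fun n => (hconst n).symm) tendsto_const_nhds
        have h4 := tendsto_nhds_unique h2 h3
        rw [inner_sub_left, h4, sub_self]
      have hmem2 : x - F 0 ∈ Vᗮᗮ := by
        rw [Submodule.mem_orthogonal]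
        intro u hu
        rw [real_inner_comm]
        exact horth u hu
      rwa [Submodule.orthogonal_orthogonal] at hmem2
    have h1 : x - L ∈ V := by
      have heq : x - L = (x - F 0) - (Submodule.orthogonalProjectionOnto V (Fstar - F 0) : H) := by
        rw [hL]; abel
      rw [heq]
      exact V.sub_mem hxF0 (Submodule.coe_mem _)
    have h2 : x - L ∈ Vᗮ := by
      have heq : x - L = w + ((Fstar - F 0) - (Submodule.orthogonalProjectionOnto V (Fstar - F 0) : H)) := by
        rw [hxweq, hL]; abel
      rw [heq]
      exact Vᗮ.add_mem hwV (Submodule.sub_starProjection_mem_orthogonal (K := V) _)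
    have h3 : (⟪x - L, x - L⟫:ℝ) = 0 := (Submodule.mem_orthogonal V (x - L)).mp h2 _ h1
    have h4 : x - L = 0 := inner_self_eq_zero.mp h3
    exact sub_eq_zero.mp h4
  -- conclusion
  intro g
  apply tendsto_of_subseq_tendsto
  intro ns hns
  set T : ℕ → ℝ := fun n => max (ns n) 0 with hT
  obtain ⟨z, ψ, hψ, hzR, hzw⟩ :=
    exists_weak_cluster (fun n => F (T n)) R (fun n => hball _ (le_max_right _ _))
  have hTtend : Tendsto (fun k => T (ψ k)) atTop atTop :=
    (tendsto_atTop_mono (fun n => le_max_left (ns n) 0) hns).comp hψ.tendsto_atTop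
  have hz : z = L := hcluster (fun k => T (ψ k)) (fun k => le_max_right _ _) hTtend z hzR
    (fun g' => hzw g')
  refine ⟨ψ, ?_⟩
  have hev : ∀ᶠ k in atTop, ⟪F (T (ψ k)), g⟫ = ⟪F (ns (ψ k)), g⟫ := by
    filter_upwards [(hns.comp hψ.tendsto_atTop).eventually_ge_atTop 0] with k hk
    show (⟪F (max (ns (ψ k)) 0), g⟫:ℝ) = ⟪F (ns (ψ k)), g⟫
    rw [max_eq_left (show (0:ℝ) ≤ ns (ψ k) from hk)]
  rw [← hz]
  exact (hzw g).congr' hev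
end

section
/- In the regression setting with squared loss, the infinite population infinitesimal boosting operator satisfies ‖𝒯(F)‖_{L²(P_X)} ≤ 2^d K^{2^d − 1} ‖F − F*‖_{L²(P_X)} for all F ∈ L²(P_X), where 𝒯(F) = ∫ ∑_{v∈{0,1}^d} (⟨F*−F, 1_{A_v}⟩ / ‖1_{A_v}‖²_{L²}) · 1_{A_v}(·) · (dQ_F/dQ_0)(ξ) Q_0(dξ). -/
open MeasureTheory ENNReal
set_option maxHeartbeats 2000000

private lemma sq_lintegral_le' {α : Type*} [MeasurableSpace α] (μ : Measure α) {f : α → ℝ≥0∞}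
    (hf : AEMeasurable f μ) :
    (∫⁻ a, f a ∂μ) ^ 2 ≤ (∫⁻ a, f a ^ 2 ∂μ) * μ Set.univ := by
  have hpq : Real.HolderConjugate 2 2 := Real.HolderConjugate.two_two
  have h := ENNReal.lintegral_mul_le_Lp_mul_Lq μ hpq hf (aemeasurable_const (b := (1:ℝ≥0∞)))
  simp only [Pi.mul_apply, mul_one, ENNReal.one_rpow, lintegral_const, one_mul] at h
  have h2 : ∀ a : ℝ≥0∞, (a ^ (1/2:ℝ)) ^ 2 = a := by
    intro a
    rw [← ENNReal.rpow_natCast (a ^ (1/2:ℝ)) 2, ← ENNReal.rpow_mul]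
    norm_num
  calc (∫⁻ a, f a ∂μ) ^ 2 ≤ ((∫⁻ a, f a ^ (2:ℝ) ∂μ) ^ (1/2:ℝ) * (μ Set.univ) ^ (1/2:ℝ)) ^ 2 := by
        exact pow_le_pow_left' h 2
    _ = (∫⁻ a, f a ^ 2 ∂μ) * μ Set.univ := by
        rw [mul_pow, h2, h2]
        congr 1
        refine lintegral_congr fun a => ?_
        rw [← ENNReal.rpow_natCast (f a) 2]
        norm_num

private lemma enorm_sq_eq (r : ℝ) : (‖r‖₊ : ℝ≥0∞) ^ 2 = ENNReal.ofReal (r ^ 2) := by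
  rw [← sq_abs, ENNReal.ofReal_pow (abs_nonneg r), ← Real.enorm_eq_ofReal_abs]
  rfl

/-- In regression with squared loss, the infinite population infinitesimal
boosting operator satisfies `‖𝒯(F)‖_{L²(P_X)} ≤ 2^d K^{2^d−1} ‖F − F*‖_{L²(P_X)}`, where
`𝒯(F)(x) = ∫ ∑_v (⟪F*−F,1_{A_v}⟫/‖1_{A_v}‖²) 1_{A_v}(x) (dQ_F/dQ_0)(ξ) Q_0(dξ)` and the
density `dQ_F/dQ_0` is bounded by `K^{2^d−1}`. -/
theorem boosting_operator_L2_bound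
    (p d K : ℕ) (hK : 1 ≤ K)
    (PX : Measure (Fin p → ℝ)) [IsProbabilityMeasure PX]
    {Ξ : Type*} [MeasurableSpace Ξ] (Q0 : Measure Ξ) [IsProbabilityMeasure Q0]
    (A : Ξ → (Fin d → Bool) → Set (Fin p → ℝ))
    (hAmeas : ∀ v, MeasurableSet {q : Ξ × (Fin p → ℝ) | q.2 ∈ A q.1 v})
    (hdisj : ∀ ξ, ∀ v w, v ≠ w → Disjoint (A ξ v) (A ξ w))
    (hcover : ∀ ξ, (⋃ v, A ξ v) = Set.univ)
    (ρ : Ξ → ℝ) (hρmeas : Measurable ρ)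
    (hρ : ∀ ξ, 0 ≤ ρ ξ ∧ ρ ξ ≤ (K : ℝ) ^ (2 ^ d - 1))
    (F Fstar : (Fin p → ℝ) → ℝ) (hF : MemLp F 2 PX) (hFstar : MemLp Fstar 2 PX)
    (TF : (Fin p → ℝ) → ℝ)
    (hTF : ∀ x, TF x = ∫ ξ, (∑ v : Fin d → Bool,
        ((∫ u in A ξ v, (Fstar u - F u) ∂PX) / (PX (A ξ v)).toReal)
          * Set.indicator (A ξ v) (fun _ => (1 : ℝ)) x) * ρ ξ ∂Q0) :
    eLpNorm TF 2 PX
      ≤ ENNReal.ofReal ((2 ^ d : ℝ) * (K : ℝ) ^ (2 ^ d - 1))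
          * eLpNorm (fun x => F x - Fstar x) 2 PX := by
  classical
  set κ : ℝ := (K : ℝ) ^ (2 ^ d - 1) with hκdef
  have hκ0 : (0:ℝ) ≤ κ := by positivity
  -- measurable representative of Fstar - F
  have hG : MemLp (fun x => Fstar x - F x) 2 PX := hFstar.sub hF
  obtain ⟨G', hG'sm, hG'ae⟩ := hG.1
  have hG'meas : Measurable G' := hG'sm.measurable
  -- sections are measurable
  have hsec : ∀ ξ v, MeasurableSet (A ξ v) := fun ξ v =>
    measurable_prodMk_left (hAmeas v)
  -- coefficients
  set c : Ξ → (Fin d → Bool) → ℝ :=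
    fun ξ v => (∫ u in A ξ v, G' u ∂PX) / (PX (A ξ v)).toReal with hcdef
  set g : Ξ → (Fin p → ℝ) → ℝ := fun ξ x =>
    (∑ v : Fin d → Bool, c ξ v * Set.indicator (A ξ v) (fun _ => (1:ℝ)) x) * ρ ξ with hgdef
  -- rewrite TF using G'
  have hTF' : ∀ x, TF x = ∫ ξ, g ξ x ∂Q0 := by
    intro x
    rw [hTF x]
    refine integral_congr_ae (Filter.Eventually.of_forall fun ξ => ?_)
    have : ∀ v, (∫ u in A ξ v, (Fstar u - F u) ∂PX) = ∫ u in A ξ v, G' u ∂PX := fun v =>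
      integral_congr_ae (ae_restrict_of_ae hG'ae)
    simp only [hgdef, hcdef, this]
  -- measurability of c in ξ
  have hμmeas : ∀ v, Measurable (fun ξ => PX (A ξ v)) := fun v =>
    measurable_measure_prodMk_left (hAmeas v)
  have hImeas : ∀ v, Measurable (fun ξ => ∫ u in A ξ v, G' u ∂PX) := by
    intro v
    have hsm : StronglyMeasurable
        (fun q : Ξ × (Fin p → ℝ) =>
          Set.indicator {q : Ξ × (Fin p → ℝ) | q.2 ∈ A q.1 v} (fun q => G' q.2) q) :=
      (hG'sm.comp_measurable measurable_snd).indicator (hAmeas v)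
    have h := hsm.integral_prod_right' (ν := PX)
    have heq : (fun ξ => ∫ u in A ξ v, G' u ∂PX)
        = fun ξ => ∫ x, Set.indicator {q : Ξ × (Fin p → ℝ) | q.2 ∈ A q.1 v}
            (fun q => G' q.2) (ξ, x) ∂PX := by
      funext ξ
      rw [← integral_indicator (hsec ξ v)]
      rfl
    rw [heq]
    exact h.measurable
  have hcmeas : ∀ v, Measurable (fun ξ => c ξ v) := fun v =>
    (hImeas v).div (hμmeas v).ennreal_toReal
  -- joint measurability
  have hΦ : Measurable (fun q : Ξ × (Fin p → ℝ) => g q.1 q.2) := by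
    apply Measurable.mul _ (hρmeas.comp measurable_fst)
    apply Finset.measurable_sum
    intro v _
    refine ((hcmeas v).comp measurable_fst).mul ?_
    have : (fun q : Ξ × (Fin p → ℝ) => Set.indicator (A q.1 v) (fun _ => (1:ℝ)) q.2)
        = Set.indicator {q : Ξ × (Fin p → ℝ) | q.2 ∈ A q.1 v} (fun _ => (1:ℝ)) := by
      funext q
      simp only [Set.indicator_apply, Set.mem_setOf_eq]
    rw [this]
    exact measurable_const.indicator (hAmeas v)
  clear_value κ c g
  -- Step 1: pointwise Jensen in ξ
  have step1 : ∀ x, (‖TF x‖₊ : ℝ≥0∞) ^ 2 ≤ ∫⁻ ξ, (‖g ξ x‖₊ : ℝ≥0∞) ^ 2 ∂Q0 := by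
    intro x
    rw [hTF' x]
    have hmg : Measurable fun ξ => g ξ x := hΦ.comp (measurable_prodMk_right)
    calc (‖∫ ξ, g ξ x ∂Q0‖₊ : ℝ≥0∞) ^ 2 ≤ (∫⁻ ξ, (‖g ξ x‖₊ : ℝ≥0∞) ∂Q0) ^ 2 :=
          pow_le_pow_left' (enorm_integral_le_lintegral_enorm _) 2
      _ ≤ (∫⁻ ξ, (‖g ξ x‖₊ : ℝ≥0∞) ^ 2 ∂Q0) * Q0 Set.univ :=
          sq_lintegral_le' Q0 hmg.enorm.aemeasurable
      _ = ∫⁻ ξ, (‖g ξ x‖₊ : ℝ≥0∞) ^ 2 ∂Q0 := by simp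
  -- unique cell containing x
  have huniq : ∀ ξ x, ∃ w, x ∈ A ξ w ∧ ∀ v, v ≠ w → x ∉ A ξ v := by
    intro ξ x
    have hx : x ∈ ⋃ v, A ξ v := (hcover ξ).symm ▸ Set.mem_univ x
    obtain ⟨w, hw⟩ := Set.mem_iUnion.mp hx
    exact ⟨w, hw, fun v hv hxv => Set.disjoint_left.mp (hdisj ξ v w hv) hxv hw⟩
  -- Step 2: per-ξ bound
  have step2 : ∀ ξ, ∫⁻ x, (‖g ξ x‖₊ : ℝ≥0∞) ^ 2 ∂PX
      ≤ ENNReal.ofReal (κ ^ 2) * ∫⁻ x, (‖G' x‖₊ : ℝ≥0∞) ^ 2 ∂PX := by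
    intro ξ
    have hptwise : ∀ x, (‖g ξ x‖₊ : ℝ≥0∞) ^ 2
        = ∑ v : Fin d → Bool,
            Set.indicator (A ξ v) (fun _ => ENNReal.ofReal ((c ξ v * ρ ξ) ^ 2)) x := by
      intro x
      obtain ⟨w, hw, hnw⟩ := huniq ξ x
      have hL : g ξ x = c ξ w * ρ ξ := by
        simp only [hgdef]
        congr 1
        rw [Finset.sum_eq_single w]
        · rw [Set.indicator_of_mem hw]; ring
        · intro v _ hv
          rw [Set.indicator_of_notMem (hnw v hv), mul_zero]
        · intro hwmem; exact absurd (Finset.mem_univ w) hwmem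
      rw [hL, enorm_sq_eq, Finset.sum_eq_single w]
      · rw [Set.indicator_of_mem hw]
      · intro v _ hv
        rw [Set.indicator_of_notMem (hnw v hv)]
      · intro hwmem; exact absurd (Finset.mem_univ w) hwmem
    calc ∫⁻ x, (‖g ξ x‖₊ : ℝ≥0∞) ^ 2 ∂PX
        = ∑ v : Fin d → Bool, ENNReal.ofReal ((c ξ v * ρ ξ) ^ 2) * PX (A ξ v) := by
          rw [lintegral_congr hptwise, lintegral_finset_sum]
          · refine Finset.sum_congr rfl fun v _ => ?_
            rw [lintegral_indicator_const (hsec ξ v)]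
          · exact fun v _ => measurable_const.indicator (hsec ξ v)
      _ ≤ ∑ v : Fin d → Bool, ENNReal.ofReal (κ ^ 2) *
            ∫⁻ x in A ξ v, (‖G' x‖₊ : ℝ≥0∞) ^ 2 ∂PX := by
          refine Finset.sum_le_sum fun v _ => ?_
          -- split: (c*ρ)^2 = ρ^2 * c^2 ≤ κ^2 * c^2, and c^2 * μ ≤ ∫⁻
          have hρb : (ρ ξ) ^ 2 ≤ κ ^ 2 := by
            have := hρ ξ
            nlinarith [this.1, this.2]
          have key : ENNReal.ofReal ((c ξ v) ^ 2) * PX (A ξ v)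
              ≤ ∫⁻ x in A ξ v, (‖G' x‖₊ : ℝ≥0∞) ^ 2 ∂PX := by
            set I : ℝ := ∫ u in A ξ v, G' u ∂PX with hIdef
            set m : ℝ≥0∞ := PX (A ξ v) with hmdef
            by_cases hm : m = 0
            · rw [hm, mul_zero]; exact zero_le ..
            have hmtop : m ≠ ⊤ := measure_ne_top PX _
            set L : ℝ≥0∞ := ∫⁻ x in A ξ v, (‖G' x‖₊ : ℝ≥0∞) ^ 2 ∂PX with hLdef
            have hCS : ENNReal.ofReal (I ^ 2) ≤ L * m := by
              have h1 : (‖I‖₊ : ℝ≥0∞) ≤ ∫⁻ u in A ξ v, (‖G' u‖₊ : ℝ≥0∞) ∂PX :=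
                enorm_integral_le_lintegral_enorm _
              have h2 : (∫⁻ u in A ξ v, (‖G' u‖₊ : ℝ≥0∞) ∂PX) ^ 2 ≤ L * m := by
                have := sq_lintegral_le' (PX.restrict (A ξ v))
                  (f := fun u => (‖G' u‖₊ : ℝ≥0∞)) hG'meas.enorm.aemeasurable
                rwa [Measure.restrict_apply_univ] at this
              calc ENNReal.ofReal (I ^ 2) = (‖I‖₊ : ℝ≥0∞) ^ 2 := (enorm_sq_eq I).symm
                _ ≤ (∫⁻ u in A ξ v, (‖G' u‖₊ : ℝ≥0∞) ∂PX) ^ 2 := pow_le_pow_left' h1 2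
                _ ≤ L * m := h2
            -- c = I / m.toReal
            have hc : ENNReal.ofReal ((c ξ v) ^ 2) = ENNReal.ofReal (I ^ 2) / m ^ 2 := by
              have hmt : (0:ℝ) < m.toReal := ENNReal.toReal_pos hm hmtop
              have : (c ξ v) ^ 2 = I ^ 2 / m.toReal ^ 2 := by
                simp only [hcdef, ← hIdef, ← hmdef, div_pow]
              rw [this, ENNReal.ofReal_div_of_pos (by positivity),
                ENNReal.ofReal_pow ENNReal.toReal_nonneg, ENNReal.ofReal_toReal hmtop]
            rw [hc]
            have hmul : ENNReal.ofReal (I ^ 2) / m ^ 2 * m = ENNReal.ofReal (I ^ 2) / m := by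
              have hminv : ((m ^ 2 : ℝ≥0∞))⁻¹ = m⁻¹ * m⁻¹ := by
                rw [pow_two, ENNReal.mul_inv (Or.inl hm) (Or.inl hmtop)]
              calc ENNReal.ofReal (I ^ 2) / m ^ 2 * m
                  = ENNReal.ofReal (I ^ 2) * m⁻¹ * (m⁻¹ * m) := by
                    rw [div_eq_mul_inv, hminv]; ring
                _ = ENNReal.ofReal (I ^ 2) * m⁻¹ := by
                    rw [ENNReal.inv_mul_cancel hm hmtop, mul_one]
                _ = ENNReal.ofReal (I ^ 2) / m := (div_eq_mul_inv _ _).symm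
            rw [hmul]
            exact ENNReal.div_le_of_le_mul hCS
          calc ENNReal.ofReal ((c ξ v * ρ ξ) ^ 2) * PX (A ξ v)
              = ENNReal.ofReal ((ρ ξ) ^ 2) * (ENNReal.ofReal ((c ξ v) ^ 2) * PX (A ξ v)) := by
                rw [← mul_assoc, ← ENNReal.ofReal_mul (by positivity)]
                congr 2
                ring
            _ ≤ ENNReal.ofReal (κ ^ 2) * ∫⁻ x in A ξ v, (‖G' x‖₊ : ℝ≥0∞) ^ 2 ∂PX :=
                mul_le_mul' (ENNReal.ofReal_le_ofReal hρb) key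
      _ = ENNReal.ofReal (κ ^ 2) *
            ∑ v : Fin d → Bool, ∫⁻ x in A ξ v, (‖G' x‖₊ : ℝ≥0∞) ^ 2 ∂PX := by
          rw [Finset.mul_sum]
      _ = ENNReal.ofReal (κ ^ 2) * ∫⁻ x, (‖G' x‖₊ : ℝ≥0∞) ^ 2 ∂PX := by
          congr 1
          have : ∀ v : Fin d → Bool, ∫⁻ x in A ξ v, (‖G' x‖₊ : ℝ≥0∞) ^ 2 ∂PX
              = ∫⁻ x, Set.indicator (A ξ v) (fun x => (‖G' x‖₊ : ℝ≥0∞) ^ 2) x ∂PX := by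
            intro v
            rw [lintegral_indicator (hsec ξ v)]
          simp only [this]
          rw [← lintegral_finset_sum _
            (f := fun v => Set.indicator (A ξ v) (fun x => (‖G' x‖₊ : ℝ≥0∞) ^ 2))
            (fun v _ => (hG'meas.enorm.pow_const 2).indicator (hsec ξ v))]
          refine lintegral_congr fun x => ?_
          obtain ⟨w, hw, hnw⟩ := huniq ξ x
          rw [Finset.sum_eq_single w]
          · rw [Set.indicator_of_mem hw]
          · intro v _ hv
            rw [Set.indicator_of_notMem (hnw v hv)]
          · intro hwmem; exact absurd (Finset.mem_univ w) hwmem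
  -- assemble
  have hswap : ∫⁻ x, ∫⁻ ξ, (‖g ξ x‖₊ : ℝ≥0∞) ^ 2 ∂Q0 ∂PX
      = ∫⁻ ξ, ∫⁻ x, (‖g ξ x‖₊ : ℝ≥0∞) ^ 2 ∂PX ∂Q0 := by
    apply lintegral_lintegral_swap
    exact ((hΦ.comp measurable_swap).enorm.pow_const 2).aemeasurable
  have hbound : ∫⁻ x, (‖TF x‖₊ : ℝ≥0∞) ^ 2 ∂PX
      ≤ ENNReal.ofReal (κ ^ 2) * ∫⁻ x, (‖G' x‖₊ : ℝ≥0∞) ^ 2 ∂PX := by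
    calc ∫⁻ x, (‖TF x‖₊ : ℝ≥0∞) ^ 2 ∂PX
        ≤ ∫⁻ x, ∫⁻ ξ, (‖g ξ x‖₊ : ℝ≥0∞) ^ 2 ∂Q0 ∂PX := lintegral_mono step1
      _ = ∫⁻ ξ, ∫⁻ x, (‖g ξ x‖₊ : ℝ≥0∞) ^ 2 ∂PX ∂Q0 := hswap
      _ ≤ ∫⁻ ξ, ENNReal.ofReal (κ ^ 2) * ∫⁻ x, (‖G' x‖₊ : ℝ≥0∞) ^ 2 ∂PX ∂Q0 :=
          lintegral_mono step2
      _ = ENNReal.ofReal (κ ^ 2) * ∫⁻ x, (‖G' x‖₊ : ℝ≥0∞) ^ 2 ∂PX := by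
          rw [lintegral_const, measure_univ, mul_one]
  -- express eLpNorms
  have heLp : ∀ h : (Fin p → ℝ) → ℝ,
      eLpNorm h 2 PX = (∫⁻ x, (‖h x‖₊ : ℝ≥0∞) ^ 2 ∂PX) ^ (1/2:ℝ) := by
    intro h
    rw [eLpNorm_eq_lintegral_rpow_enorm_toReal two_ne_zero ENNReal.ofNat_ne_top]
    have h2 : ((2:ℝ≥0∞)).toReal = (2:ℝ) := by norm_num
    rw [h2]
    congr 1
    refine lintegral_congr fun x => ?_
    rw [← ENNReal.rpow_natCast ((‖h x‖₊ : ℝ≥0∞)) 2]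
    norm_num
    rfl
  have h2 : ∀ a : ℝ≥0∞, (a ^ 2) ^ (1/2:ℝ) = a := by
    intro a
    rw [← ENNReal.rpow_natCast a 2, ← ENNReal.rpow_mul]
    norm_num
  have hGnorm : (∫⁻ x, (‖G' x‖₊ : ℝ≥0∞) ^ 2 ∂PX) ^ (1/2:ℝ)
      = eLpNorm (fun x => F x - Fstar x) 2 PX := by
    rw [← heLp G', eLpNorm_congr_ae hG'ae.symm]
    have : (fun x => Fstar x - F x) = -(fun x => F x - Fstar x) := by
      funext x; simp
    rw [this, eLpNorm_neg]
  calc eLpNorm TF 2 PX = (∫⁻ x, (‖TF x‖₊ : ℝ≥0∞) ^ 2 ∂PX) ^ (1/2:ℝ) := heLp TF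
    _ ≤ (ENNReal.ofReal (κ ^ 2) * ∫⁻ x, (‖G' x‖₊ : ℝ≥0∞) ^ 2 ∂PX) ^ (1/2:ℝ) := by
        exact ENNReal.rpow_le_rpow hbound (by norm_num)
    _ = ENNReal.ofReal κ * (∫⁻ x, (‖G' x‖₊ : ℝ≥0∞) ^ 2 ∂PX) ^ (1/2:ℝ) := by
        rw [ENNReal.mul_rpow_of_nonneg _ _ (by norm_num : (0:ℝ) ≤ 1/2),
          ENNReal.ofReal_pow hκ0, h2]
    _ = ENNReal.ofReal κ * eLpNorm (fun x => F x - Fstar x) 2 PX := by rw [hGnorm]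
    _ ≤ ENNReal.ofReal ((2 ^ d : ℝ) * κ) * eLpNorm (fun x => F x - Fstar x) 2 PX := by
        refine mul_le_mul_left (ENNReal.ofReal_le_ofReal ?_) _
        nlinarith [one_le_pow₀ (by norm_num : (1:ℝ) ≤ 2) (n := d)]
end

section
/- Let H be a separable Hilbert space, B ⊂ H a bounded set with ‖f − F*‖ ≤ C for all f ∈ B, and ψ: [−C,C]^k → ℝ bounded and uniformly continuous. Let μ be a probability measure on the k-fold product of the closed unit ball of H (with the norm topology). Then the map φ: B → ℝ defined by φ(F) = ∫ ψ(⟨F−F*, g_1⟩, …, ⟨F−F*, g_k⟩) μ(dg_1 … dg_k) is continuous on B with respect to the weak topology of H. -/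
open MeasureTheory Filter
open scoped RealInnerProductSpace Topology

/-- On a bounded set `B` of a separable Hilbert space, the map
`φ(F) = ∫ ψ(⟪F−F*,g_1⟫,…,⟪F−F*,g_k⟫) μ(dg)`, with `ψ` bounded and uniformly continuous and
`μ` a probability measure on the `k`-fold product of the unit ball, is continuous for the
weak topology (weak convergence of sequences in `B` implies convergence of `φ`). -/
theorem weak_continuity_of_integral_functional
    {H : Type*} [NormedAddCommGroup H] [InnerProductSpace ℝ H]
    [TopologicalSpace.SeparableSpace H] [MeasurableSpace H] [BorelSpace H]
    (k : ℕ) (B : Set H) (Fstar : H) (C : ℝ)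
    (hB : ∀ f ∈ B, ‖f - Fstar‖ ≤ C)
    (ψ : (Fin k → ℝ) → ℝ) (hψuc : UniformContinuous ψ)
    (M : ℝ) (hψb : ∀ x, |ψ x| ≤ M)
    (μ : Measure (Fin k → H)) [IsProbabilityMeasure μ]
    (hμsupp : μ {g | ∀ i, ‖g i‖ ≤ 1} = 1)
    (φ : H → ℝ)
    (hφ : ∀ F, φ F = ∫ g, ψ (fun i => ⟪F - Fstar, g i⟫) ∂μ) :
    ∀ (u : ℕ → H) (x : H), (∀ n, u n ∈ B) → x ∈ B →
      (∀ h : H, Tendsto (fun n => ⟪u n, h⟫) atTop (𝓝 ⟪x, h⟫)) →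
      Tendsto (fun n => φ (u n)) atTop (𝓝 (φ x)) := by
  haveI : SecondCountableTopology H := UniformSpace.secondCountable_of_separable H
  intro u x hu hx hw
  simp only [hφ]
  have hmeas : ∀ F : H,
      AEStronglyMeasurable (fun g : Fin k → H => ψ (fun i => ⟪F - Fstar, g i⟫)) μ := by
    intro F
    apply Continuous.aestronglyMeasurable
    exact hψuc.continuous.comp (continuous_pi fun i =>
      (innerSL ℝ (F - Fstar)).continuous.comp (continuous_apply i))
  refine tendsto_integral_of_dominated_convergence (fun _ => M) (fun n => hmeas _)
    (integrable_const M) ?_ ?_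
  · intro n
    filter_upwards with g
    simpa using hψb _
  · filter_upwards with g
    have htuple : Tendsto (fun n => (fun i => ⟪u n - Fstar, g i⟫))
        atTop (𝓝 (fun i => ⟪x - Fstar, g i⟫)) := by
      apply tendsto_pi_nhds.mpr
      intro i
      simpa [inner_sub_left] using (hw (g i)).sub (tendsto_const_nhds (x := ⟪Fstar, g i⟫))
    exact (hψuc.continuous.tendsto _).comp htuple
end
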